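/- arXiv:math/0312321 — 10 statements merged into one kernel-verified Lean document; each statement's English description precedes it below -/
import Mathlib

section
/- Let P be a monic real polynomial of degree n ≥ 2 with all roots real, and let Q be a real polynomial of degree n−1 whose roots weakly interlace those of P. Then for every real λ, the polynomial P − λQ has all roots real. -/
/-!
If some `y i` coincides with a neighbouring `x m`, then `X - y i` is a common factor of `P` and `Q`,
and removing both zeros leaves an interlacing pair of one degree less. Otherwise the interlacing is
strict, so `Q` alternates in sign along `x 0 < x 1 < ⋯`; as `(P - λQ)(x i) = -λ Q(x i)`, the
intermediate value theorem puts a zero of `P - λQ` in each of the `n - 1` gaps, and a real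
polynomial of degree `n` with `n - 1` real zeros has all its zeros real.
-/

open Polynomial Finset

namespace Polynomial

theorem splits_of_natDegree_le_card_roots_add_one {K : Type*} [Field K] {p : K[X]} (hp : p ≠ 0)
    (h : p.natDegree ≤ p.roots.card + 1) : p.Splits := by
  obtain ⟨q, hq⟩ := prod_multiset_X_sub_C_dvd p
  have hprod : (p.roots.map fun a => X - C a).prod.Splits :=
    Splits.multisetProd <| by
      simp only [Multiset.mem_map]
      rintro _ ⟨a, -, rfl⟩
      exact Splits.X_sub_C a
  have hq0 : q ≠ 0 := by rintro rfl; exact hp (by rw [hq, mul_zero])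
  have hdeg : p.natDegree = p.roots.card + q.natDegree := by
    conv_lhs => rw [hq]
    rw [natDegree_mul (monic_multiset_prod_of_monic _ _ fun a _ => monic_X_sub_C a).ne_zero hq0,
      natDegree_multiset_prod_X_sub_C_eq_card]
  rw [hq]
  exact hprod.mul (Splits.of_natDegree_le_one (by omega))

theorem exists_root_Ioo_of_eval_mul_eval_neg (p : ℝ[X]) {a b : ℝ} (hab : a ≤ b)
    (h : p.eval a * p.eval b < 0) : ∃ r ∈ Set.Ioo a b, p.IsRoot r := by
  rcases mul_neg_iff.mp h with ⟨ha, hb⟩ | ⟨ha, hb⟩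
  · exact intermediate_value_Ioo' hab p.continuous.continuousOn ⟨hb, ha⟩
  · exact intermediate_value_Ioo hab p.continuous.continuousOn ⟨ha, hb⟩

theorem sub_one_le_card_roots_of_sign_changes {p : ℝ[X]} {n : ℕ} {x : ℕ → ℝ}
    (hx : MonotoneOn x (Set.Iio n))
    (hsign : ∀ i, i + 1 < n → p.eval (x i) * p.eval (x (i + 1)) < 0) :
    n - 1 ≤ p.roots.card := by
  have hroot : ∀ i, ∃ r, i + 1 < n → r ∈ Set.Ioo (x i) (x (i + 1)) ∧ p.IsRoot r := by
    intro i
    by_cases hi : i + 1 < n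
    · obtain ⟨r, hr, hroot⟩ := p.exists_root_Ioo_of_eval_mul_eval_neg
        (hx (by simp; omega) (by simpa using hi) (by omega)) (hsign i hi)
      exact ⟨r, fun _ => ⟨hr, hroot⟩⟩
    · exact ⟨0, fun h => absurd h hi⟩
  choose r hr using hroot
  have hr_strictMono : StrictMonoOn r (Set.Iio (n - 1)) := by
    intro i hi j hj hij
    simp only [Set.mem_Iio] at hi hj
    calc r i < x (i + 1) := (hr i (by omega)).1.2
      _ ≤ x j := hx (by simp; omega) (by simp; omega) hij
      _ < r j := (hr j (by omega)).1.1
  rcases Nat.lt_or_ge n 2 with hn | hn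
  · omega
  have hp : p ≠ 0 := fun h => by simpa [h] using hsign 0 (by omega)
  calc n - 1 = ((range (n - 1)).image r).card := by
        rw [card_image_of_injOn (by simpa using hr_strictMono.injOn), card_range]
    _ ≤ p.roots.toFinset.card := card_le_card fun t ht => by
        obtain ⟨i, hi, rfl⟩ := mem_image.mp ht
        rw [Multiset.mem_toFinset, mem_roots hp]
        exact (hr i (by simp at hi; omega)).2
    _ ≤ p.roots.card := Multiset.toFinset_card_le _

end Polynomial

def Interlaces {α : Type*} [Preorder α] (n : ℕ) (x y : ℕ → α) : Prop :=
  ∀ i, i + 1 < n → x i ≤ y i ∧ y i ≤ x (i + 1)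

namespace Interlaces

variable {α : Type*} [Preorder α] {n : ℕ} {x y : ℕ → α}

theorem monotoneOn (h : Interlaces n x y) : MonotoneOn x (Set.Iio n) :=
  monotoneOn_of_le_succ Set.ordConnected_Iio fun i _ _ hi =>
    have hi : i + 1 < n := by simpa using hi
    (h i hi).1.trans (h i hi).2

theorem comp (h : Interlaces n x y) {m : ℕ} {s t : ℕ → ℕ} (hts : ∀ j, t j ≤ s j)
    (hst : ∀ j, s j + 1 ≤ t (j + 1)) (ht : ∀ j, j + 1 < m → t (j + 1) < n) :
    Interlaces m (x ∘ t) (y ∘ s) := by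
  intro j hj
  have hs : s j + 1 < n := (hst j).trans_lt (ht j hj)
  have htj : t j < n := (hts j).trans_lt (by omega)
  exact ⟨(h.monotoneOn (by simpa using htj) (by simp; omega) (hts j)).trans (h _ hs).1,
    (h _ hs).2.trans (h.monotoneOn (by simpa using hs) (by simpa using ht j hj) (hst j))⟩

end Interlaces

def skipIndex (m j : ℕ) : ℕ := if j < m then j else j + 1

theorem prod_range_eq_mul_prod_skipIndex {M : Type*} [CommMonoid M] (f : ℕ → M) {n m : ℕ}
    (hm : m < n) : ∏ i ∈ range n, f i = f m * ∏ j ∈ range (n - 1), f (skipIndex m j) := by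
  obtain ⟨n, rfl⟩ : ∃ k, n = k + 1 := ⟨n - 1, by omega⟩
  rw [Nat.add_sub_cancel, prod_range f,
    Fin.prod_univ_succAbove (fun i : Fin (n + 1) => f i) ⟨m, hm⟩, prod_range]
  congr 1
  refine Fintype.prod_congr _ _ fun j => congrArg f ?_
  simp only [Fin.succAbove, Fin.lt_def, Fin.val_castSucc, skipIndex]
  split_ifs <;> simp

theorem Interlaces.comp_skipIndex {α : Type*} [Preorder α] {n : ℕ} {x y : ℕ → α}
    (h : Interlaces n x y) {i m : ℕ} (him : i ≤ m) (hmi : m ≤ i + 1) (hi : i + 1 < n) :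
    Interlaces (n - 1) (x ∘ skipIndex m) (y ∘ skipIndex i) :=
  h.comp (fun j => by unfold skipIndex; split_ifs <;> omega)
    (fun j => by unfold skipIndex; split_ifs <;> omega)
    (fun j _ => by unfold skipIndex; split_ifs <;> omega)

noncomputable def pencil (n : ℕ) (x y : ℕ → ℝ) (a : ℝ) : ℝ[X] :=
  ∏ i ∈ range n, (X - C (x i)) - C a * ∏ i ∈ range (n - 1), (X - C (y i))

section Pencil

variable {n : ℕ} {x y : ℕ → ℝ} {a : ℝ}

theorem degree_C_mul_prod_lt_degree_prod (hn : 1 ≤ n) :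
    (C a * ∏ i ∈ range (n - 1), (X - C (y i))).degree
      < (∏ i ∈ range n, (X - C (x i))).degree := by
  refine degree_lt_degree ((natDegree_C_mul_le _ _).trans_lt ?_)
  rw [natDegree_prod_of_monic _ _ fun i _ => monic_X_sub_C (x i),
    natDegree_prod_of_monic _ _ fun i _ => monic_X_sub_C (y i)]
  simp only [natDegree_X_sub_C, sum_const, card_range, smul_eq_mul, mul_one]
  omega

theorem monic_pencil (hn : 1 ≤ n) : (pencil n x y a).Monic :=
  (monic_prod_of_monic _ _ fun i _ => monic_X_sub_C (x i)).sub_of_left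
    (degree_C_mul_prod_lt_degree_prod hn)

theorem natDegree_pencil (hn : 1 ≤ n) : (pencil n x y a).natDegree = n := by
  rw [pencil, natDegree_eq_of_degree_eq (degree_sub_eq_left_of_degree_lt
    (degree_C_mul_prod_lt_degree_prod hn))]
  simp [natDegree_prod_of_monic _ _ fun i _ => monic_X_sub_C (x i)]

theorem eval_pencil {i : ℕ} (hi : i < n) :
    (pencil n x y a).eval (x i) = -a * ∏ j ∈ range (n - 1), (x i - y j) := by
  have hP : (∏ j ∈ range n, (X - C (x j))).eval (x i) = 0 := by
    rw [eval_prod]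
    exact prod_eq_zero (mem_range.mpr hi) (by simp)
  simp [pencil, hP, eval_prod]

theorem pencil_eq_X_sub_C_mul {i m : ℕ} (hi : i + 1 < n) (hm : m < n) (h : y i = x m) :
    pencil n x y a
      = (X - C (y i)) * pencil (n - 1) (x ∘ skipIndex m) (y ∘ skipIndex i) a := by
  rw [pencil, pencil, prod_range_eq_mul_prod_skipIndex _ hm,
    prod_range_eq_mul_prod_skipIndex (fun j => X - C (y j)) (by omega : i < n - 1), h]
  simp only [Function.comp_apply]
  ring

theorem prod_sub_mul_prod_sub_neg (hx : MonotoneOn x (Set.Iio n))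
    (hstrict : ∀ i, i + 1 < n → x i < y i ∧ y i < x (i + 1)) {i : ℕ} (hi : i + 1 < n) :
    (∏ j ∈ range (n - 1), (x i - y j)) * ∏ j ∈ range (n - 1), (x (i + 1) - y j) < 0 := by
  have hxi : x i ≤ x (i + 1) := hx (by simp; omega) (by simpa using hi) (by omega)
  rw [← prod_mul_distrib, ← mul_prod_erase _ _ (mem_range.mpr (by omega : i < n - 1))]
  refine mul_neg_of_neg_of_pos ?_ (prod_pos fun j hj => ?_)
  · obtain ⟨h1, h2⟩ := hstrict i hi
    exact mul_neg_of_neg_of_pos (by linarith) (by linarith)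
  obtain ⟨hji, hj⟩ : j ≠ i ∧ j < n - 1 := by simpa using hj
  rcases hji.lt_or_gt with hlt | hgt
  · have : y j < x i :=
      (hstrict j (by omega)).2.trans_le (hx (by simp; omega) (by simp; omega) hlt)
    exact mul_pos (by linarith) (by linarith)
  · have : x (i + 1) < y j :=
      (hx (by simpa using hi) (by simp; omega) hgt).trans_lt (hstrict j (by omega)).1
    exact mul_pos_of_neg_of_neg (by linarith) (by linarith)

theorem splits_pencil (a : ℝ) (hn : 1 ≤ n) (h : Interlaces n x y) :
    (pencil n x y a).Splits := by
  induction n generalizing x y with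
  | zero => omega
  | succ n ih =>
    rcases eq_or_ne a 0 with rfl | ha
    · simp only [pencil, C_0, zero_mul, sub_zero]
      exact Splits.prod fun i _ => Splits.X_sub_C (x i)
    by_cases hcommon : ∃ i m, i + 1 < n + 1 ∧ i ≤ m ∧ m ≤ i + 1 ∧ y i = x m
    · obtain ⟨i, m, hi, him, hmi, hyx⟩ := hcommon
      rw [pencil_eq_X_sub_C_mul hi (by omega) hyx, splits_X_sub_C_mul_iff]
      exact ih (by omega) (h.comp_skipIndex him hmi hi)
    have hstrict : ∀ i, i + 1 < n + 1 → x i < y i ∧ y i < x (i + 1) := fun i hi =>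
      ⟨(h i hi).1.lt_of_ne fun e => hcommon ⟨i, i, hi, le_rfl, by omega, e.symm⟩,
        (h i hi).2.lt_of_ne fun e => hcommon ⟨i, i + 1, hi, by omega, le_rfl, e⟩⟩
    have hsign : ∀ i, i + 1 < n + 1 →
        (pencil (n + 1) x y a).eval (x i) * (pencil (n + 1) x y a).eval (x (i + 1)) < 0 := by
      intro i hi
      rw [eval_pencil (by omega), eval_pencil hi]
      calc _ = a ^ 2 * ((∏ j ∈ range (n + 1 - 1), (x i - y j)) *
            ∏ j ∈ range (n + 1 - 1), (x (i + 1) - y j)) := by ring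
        _ < 0 := mul_neg_of_pos_of_neg (by positivity)
            (prod_sub_mul_prod_sub_neg h.monotoneOn hstrict hi)
    refine splits_of_natDegree_le_card_roots_add_one (monic_pencil hn).ne_zero ?_
    have := sub_one_le_card_roots_of_sign_changes h.monotoneOn hsign
    rw [natDegree_pencil hn]
    omega

end Pencil

theorem pencil_hyperbolic_general (n : ℕ) (hn : 2 ≤ n) (x y : ℕ → ℝ) (c : ℝ)
    (hinter : ∀ i, i + 1 < n → x i ≤ y i ∧ y i ≤ x (i + 1))
    (P Q : Polynomial ℝ)
    (hP : P = ∏ i ∈ Finset.range n, (X - C (x i)))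
    (hQ : Q = C c * ∏ i ∈ Finset.range (n - 1), (X - C (y i))) :
    ∀ l : ℝ, (P - C l * Q).roots.card = n := by
  intro l
  have hpencil : P - C l * Q = pencil n x y (l * c) := by
    rw [hP, hQ, pencil, C_mul, mul_assoc]
  rw [hpencil, ← (splits_pencil (l * c) (by omega) hinter).natDegree_eq_card_roots,
    natDegree_pencil (by omega)]

theorem pencil_hyperbolic (n : ℕ) (hn : 2 ≤ n) (x y : ℕ → ℝ) (c : ℝ) (hc : c ≠ 0)
    (hx : ∀ i j, i ≤ j → j < n → x i ≤ x j)
    (hinter : ∀ i, i + 1 < n → x i ≤ y i ∧ y i ≤ x (i + 1))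
    (P Q : Polynomial ℝ)
    (hP : P = ∏ i ∈ Finset.range n, (X - C (x i)))
    (hQ : Q = C c * ∏ i ∈ Finset.range (n - 1), (X - C (y i))) :
    ∀ l : ℝ, (P - C l * Q).roots.card = n :=
  pencil_hyperbolic_general n hn x y c hinter P Q hP hQ
end

section
/- Let P be a monic strictly hyperbolic polynomial of degree n ≥ 2 and Q of degree n−1, leading coefficient n, with zeros strictly interlacing those of P. Then the largest root of P − λQ is a convex function of λ ∈ ℝ. -/
/-!
Write `Y` for the largest zero of `Q`. For every polynomial `L` of degree at most one, `P - L Q`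
has the signs of `P` at the zeros of `Q`, which alternate and end negative at `Y`; so it has
`n - 2` roots below `Y`. If it also vanishes at two points `v < w` above `Y`, these are all its
roots, which forces a negative leading coefficient and `P - L Q ≥ 0` on `[v, w]`.

For constant `L = λ` the leading coefficient is `1`, so `P - λ Q` has no root in `(Y, x_n(λ))`
and is negative there; hence `x_n(λ) ≤ t` whenever `Y < t` and `(P - λ Q)(t) ≥ 0`. For `L` the
secant line through `(x_n(λ₁), λ₁)` and `(x_n(λ₂), λ₂)`, which satisfies `L(t) = λ` for
`t = a x_n(λ₁) + b x_n(λ₂)` and `λ = a λ₁ + b λ₂`, it gives `(P - λ Q)(t) ≥ 0`.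
-/

open Polynomial Finset

theorem exists_mem_Ioo_eq_zero_of_mul_neg {f : ℝ → ℝ} (hf : Continuous f) {a b : ℝ}
    (hab : a ≤ b) (h : f a * f b < 0) : ∃ c ∈ Set.Ioo a b, f c = 0 := by
  rcases mul_neg_iff.1 h with ⟨ha, hb⟩ | ⟨ha, hb⟩
  · exact intermediate_value_Ioo' hab hf.continuousOn ⟨hb, ha⟩
  · exact intermediate_value_Ioo hab hf.continuousOn ⟨ha, hb⟩

theorem exists_finset_zeros_of_mul_neg {f : ℝ → ℝ} (hf : Continuous f) {y : ℕ → ℝ} :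
    ∀ k, (∀ i < k, y i < y (i + 1)) → (∀ i < k, f (y i) * f (y (i + 1)) < 0) →
      ∃ F : Finset ℝ, #F = k ∧ ∀ z ∈ F, f z = 0 ∧ z < y k
  | 0, _, _ => ⟨∅, by simp⟩
  | k + 1, hy, hsign => by
    obtain ⟨F, hcard, hF⟩ := exists_finset_zeros_of_mul_neg hf k
      (fun i hi => hy i (by omega)) (fun i hi => hsign i (by omega))
    obtain ⟨r, ⟨hkr, hrk⟩, hr⟩ :=
      exists_mem_Ioo_eq_zero_of_mul_neg hf (hy k k.lt_succ_self).le (hsign k k.lt_succ_self)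
    refine ⟨insert r F, ?_, ?_⟩
    · rw [card_insert_of_notMem fun hrF => ((hF r hrF).2.trans hkr).false, hcard]
    · rw [forall_mem_insert]
      exact ⟨⟨hr, hrk⟩, fun z hz => ⟨(hF z hz).1, (hF z hz).2.trans (hy k k.lt_succ_self)⟩⟩

theorem Polynomial.C_leadingCoeff_mul_prod_X_sub_C_of_natDegree_le {R : Type*} [CommRing R]
    [IsDomain R] {p : R[X]} (hp : p ≠ 0) {s : Finset R} (hs : ∀ z ∈ s, p.IsRoot z)
    (hdeg : p.natDegree ≤ #s) : C p.leadingCoeff * ∏ z ∈ s, (X - C z) = p := by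
  have hle : s.val ≤ p.roots :=
    (Multiset.le_iff_subset s.nodup).2 fun z hz => (mem_roots hp).2 (hs z hz)
  have hroots : s.val = p.roots :=
    Multiset.eq_of_le_of_card_le hle (p.card_roots'.trans hdeg)
  have hcard : Multiset.card p.roots = p.natDegree :=
    le_antisymm p.card_roots' (hroots ▸ hdeg)
  conv_rhs => rw [← C_leadingCoeff_mul_prod_multiset_X_sub_C hcard, ← hroots]
  rfl

theorem neg_one_pow_mul_prod_sub_pos {n i : ℕ} {x : ℕ → ℝ} {c : ℝ}
    (hx : ∀ i j, i < j → j < n → x i < x j) (hi : i + 1 < n) (hc : x i < c ∧ c < x (i + 1)) :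
    0 < (-1) ^ (n - 1 - i) * ∏ j ∈ range n, (c - x j) := by
  rw [← prod_range_mul_prod_Ico _ hi.le, mul_left_comm]
  refine mul_pos (prod_pos fun j hj => ?_) ?_
  · have hji : j ≤ i := Nat.lt_succ_iff.1 (mem_range.1 hj)
    have : x j ≤ x i := hji.eq_or_lt.elim (fun h => h ▸ le_rfl) fun h => (hx j i h (by omega)).le
    linarith [hc.1]
  · rw [show n - 1 - i = #(Ico (i + 1) n) by simp; omega, ← prod_neg]
    refine prod_pos fun j hj => ?_
    obtain ⟨hij, hjn⟩ := mem_Ico.1 hj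
    have : x (i + 1) ≤ x j :=
      hij.eq_or_lt.elim (fun h => h ▸ le_rfl) fun h => (hx _ j h hjn).le
    linarith [hc.2]

theorem Polynomial.Monic.exists_isRoot_gt_of_eval_neg {p : ℝ[X]} (hp : p.Monic) {a : ℝ}
    (ha : p.eval a < 0) : ∃ r, a < r ∧ p.IsRoot r := by
  have hdeg : 0 < p.degree := natDegree_pos_iff_degree_pos.1 <| hp.natDegree_pos.2 <| by
    rintro rfl
    norm_num at ha
  have htop := p.tendsto_atTop_of_leadingCoeff_nonneg hdeg (hp.leadingCoeff ▸ zero_le_one)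
  obtain ⟨b, hb, hab⟩ := ((htop.eventually_gt_atTop 0).and (Filter.eventually_gt_atTop a)).exists
  obtain ⟨r, hr, hr0⟩ := intermediate_value_Ioo hab.le p.continuous.continuousOn ⟨ha, hb⟩
  exact ⟨r, hr.1, hr0⟩

theorem Polynomial.exists_natDegree_le_one_eval_combo {s u : ℝ} (h : s ≠ u) (l₁ l₂ : ℝ) :
    ∃ L : ℝ[X], L.natDegree ≤ 1 ∧
      ∀ a b : ℝ, a + b = 1 → L.eval (a * s + b * u) = a * l₁ + b * l₂ := by
  refine ⟨C l₁ + C ((l₂ - l₁) / (u - s)) * (X - C s), by compute_degree!, fun a b hab => ?_⟩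
  have hus : u - s ≠ 0 := sub_ne_zero.2 h.symm
  simp only [eval_add, eval_mul, eval_C, eval_sub, eval_X]
  field_simp
  linear_combination (s * l₂ - l₁ * u) * hab

section SignPattern

variable {k : ℕ} {y : ℕ → ℝ} {G : ℝ[X]}

theorem Polynomial.leadingCoeff_neg_and_eval_nonneg_of_sign (hy : ∀ i < k, y i < y (i + 1))
    (hsign : ∀ i ≤ k, 0 < (-1) ^ (k + 1 - i) * G.eval (y i)) (hdeg : G.natDegree ≤ k + 2)
    {v w : ℝ} (hv : y k < v) (hvw : v < w) (hv0 : G.IsRoot v) (hw0 : G.IsRoot w) :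
    G.leadingCoeff < 0 ∧ ∀ t ∈ Set.Icc v w, 0 ≤ G.eval t := by
  have halt : ∀ i < k, G.eval (y i) * G.eval (y (i + 1)) < 0 := by
    intro i hi
    have h₁ := hsign i hi.le
    have h₂ := hsign (i + 1) hi
    rw [show k + 1 - i = k + 1 - (i + 1) + 1 by omega, pow_succ] at h₁
    rcases neg_one_pow_eq_or ℝ (k + 1 - (i + 1)) with h | h <;> rw [h] at h₁ h₂ <;> nlinarith
  have hGk : G.eval (y k) < 0 := by simpa using hsign k le_rfl
  obtain ⟨F, hcard, hF⟩ := exists_finset_zeros_of_mul_neg G.continuous k hy halt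
  have hvF : v ∉ F := fun h => ((hF v h).2.trans hv).false
  have hwF : w ∉ insert v F := by
    rw [mem_insert, not_or]
    exact ⟨hvw.ne', fun h => ((hF w h).2.trans (hv.trans hvw)).false⟩
  have hfac : C G.leadingCoeff * ∏ z ∈ insert w (insert v F), (X - C z) = G := by
    refine C_leadingCoeff_mul_prod_X_sub_C_of_natDegree_le (fun h => by simp [h] at hGk) ?_ ?_
    · simp only [forall_mem_insert]
      exact ⟨hw0, hv0, fun z hz => (hF z hz).1⟩
    · rwa [card_insert_of_notMem hwF, card_insert_of_notMem hvF, hcard]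
  have heval (t : ℝ) : G.eval t = G.leadingCoeff * ((t - w) * (t - v) * ∏ z ∈ F, (t - z)) := by
    conv_lhs => rw [← hfac]
    simp [eval_prod, prod_insert hwF, prod_insert hvF, mul_assoc]
  have hprod (t : ℝ) (ht : y k ≤ t) : 0 < ∏ z ∈ F, (t - z) :=
    prod_pos fun z hz => sub_pos.2 ((hF z hz).2.trans_le ht)
  have hc : G.leadingCoeff < 0 := by
    rw [heval] at hGk
    refine neg_of_mul_neg_left hGk (mul_pos ?_ (hprod _ le_rfl)).le
    exact mul_pos_of_neg_of_neg (by linarith) (by linarith)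
  refine ⟨hc, fun t ⟨hvt, htw⟩ => ?_⟩
  rw [heval]
  refine mul_nonneg_of_nonpos_of_nonpos hc.le (mul_nonpos_of_nonpos_of_nonneg ?_ (hprod t ?_).le)
  · exact mul_nonpos_of_nonpos_of_nonneg (by linarith) (by linarith)
  · linarith

theorem Polynomial.Monic.le_of_isRoot_of_eval_nonneg (hG : G.Monic)
    (hy : ∀ i < k, y i < y (i + 1)) (hsign : ∀ i ≤ k, 0 < (-1) ^ (k + 1 - i) * G.eval (y i))
    (hdeg : G.natDegree ≤ k + 2) {r t : ℝ} (hr : G.IsRoot r) (ht : y k < t)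
    (h0 : 0 ≤ G.eval t) : r ≤ t := by
  by_contra! htr
  have hGk : G.eval (y k) < 0 := by simpa using hsign k le_rfl
  obtain ⟨v, ⟨hkv, hvt⟩, hv⟩ := intermediate_value_Ioc ht.le G.continuous.continuousOn ⟨hGk, h0⟩
  have hneg :=
    (leadingCoeff_neg_and_eval_nonneg_of_sign hy hsign hdeg hkv (hvt.trans_lt htr) hv hr).1
  rw [hG.leadingCoeff] at hneg
  exact one_pos.not_gt hneg

end SignPattern

/-- The interlacing hypothesis, recorded through the signs of `P` at the zeros `y 0 < ⋯ < y k`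
of `Q`. -/
structure IsInterlacing (k : ℕ) (y : ℕ → ℝ) (P Q : ℝ[X]) : Prop where
  lt_succ : ∀ i < k, y i < y (i + 1)
  sign_eval : ∀ i ≤ k, 0 < (-1) ^ (k + 1 - i) * P.eval (y i)
  isRoot : ∀ i ≤ k, Q.IsRoot (y i)
  monic : P.Monic
  natDegree_eq : P.natDegree = k + 2
  natDegree_le : Q.natDegree ≤ k + 1

namespace IsInterlacing

variable {k : ℕ} {y : ℕ → ℝ} {P Q : ℝ[X]}

theorem of_prod {x : ℕ → ℝ} (hx : ∀ i j, i < j → j < k + 2 → x i < x j)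
    (hinter : ∀ i, i + 1 < k + 2 → x i < y i ∧ y i < x (i + 1)) (c : ℝ) :
    IsInterlacing k y (∏ i ∈ range (k + 2), (X - C (x i)))
      (C c * ∏ i ∈ range (k + 1), (X - C (y i))) where
  lt_succ i hi := (hinter i (by omega)).2.trans (hinter (i + 1) (by omega)).1
  sign_eval i hi := by
    simpa [eval_prod] using neg_one_pow_mul_prod_sub_pos hx (by omega) (hinter i (by omega))
  isRoot i hi := by
    simp only [IsRoot, eval_mul, eval_C, eval_prod, eval_sub, eval_X]
    rw [prod_eq_zero (mem_range.2 (Nat.lt_succ_of_le hi)) (sub_self (y i)), mul_zero]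
  monic := monic_prod_of_monic _ _ fun i _ => monic_X_sub_C (x i)
  natDegree_eq := by simp [natDegree_prod_of_monic _ _ fun i _ => monic_X_sub_C (x i)]
  natDegree_le := (natDegree_C_mul_le _ _).trans <| by
    simp [natDegree_prod_of_monic _ _ fun i _ => monic_X_sub_C (y i)]

theorem sign_eval_sub_mul (h : IsInterlacing k y P Q) (L : ℝ[X]) :
    ∀ i ≤ k, 0 < (-1) ^ (k + 1 - i) * (P - L * Q).eval (y i) := fun i hi => by
  simpa [(h.isRoot i hi).eq_zero] using h.sign_eval i hi

theorem natDegree_sub_mul_le (h : IsInterlacing k y P Q) {L : ℝ[X]} (hL : L.natDegree ≤ 1) :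
    (P - L * Q).natDegree ≤ k + 2 :=
  (natDegree_sub_le _ _).trans <| max_le h.natDegree_eq.le <|
    natDegree_mul_le.trans (by linarith [h.natDegree_le])

theorem monic_sub_C_mul (h : IsInterlacing k y P Q) (l : ℝ) : (P - C l * Q).Monic :=
  h.monic.sub_of_left <| degree_lt_degree <|
    (natDegree_C_mul_le l Q).trans_lt (by rw [h.natDegree_eq]; linarith [h.natDegree_le])

theorem le_of_isRoot_of_eval_nonneg (h : IsInterlacing k y P Q) {l r t : ℝ}
    (hr : (P - C l * Q).IsRoot r) (ht : y k < t) (h0 : 0 ≤ (P - C l * Q).eval t) : r ≤ t :=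
  (h.monic_sub_C_mul l).le_of_isRoot_of_eval_nonneg h.lt_succ (h.sign_eval_sub_mul _)
    (h.natDegree_sub_mul_le ((natDegree_C l).trans_le zero_le_one)) hr ht h0

theorem lt_of_forall_isRoot_le (h : IsInterlacing k y P Q) {l r : ℝ}
    (hr : ∀ t, (P - C l * Q).IsRoot t → t ≤ r) : y k < r := by
  have hk : (P - C l * Q).eval (y k) < 0 := by simpa using h.sign_eval_sub_mul (C l) k le_rfl
  obtain ⟨t, hkt, ht⟩ := (h.monic_sub_C_mul l).exists_isRoot_gt_of_eval_neg hk
  exact hkt.trans_le (hr t ht)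

theorem eval_convexCombination_nonneg (h : IsInterlacing k y P Q) {l₁ l₂ s u a b : ℝ}
    (hs : y k < s) (hu : y k < u) (hs0 : (P - C l₁ * Q).IsRoot s)
    (hu0 : (P - C l₂ * Q).IsRoot u) (ha : 0 ≤ a) (hb : 0 ≤ b) (hab : a + b = 1) :
    0 ≤ (P - C (a * l₁ + b * l₂) * Q).eval (a * s + b * u) := by
  wlog hsu : s ≤ u generalizing l₁ l₂ s u a b
  · simpa only [add_comm] using this hu hs hu0 hs0 hb ha (by linarith) (le_of_not_ge hsu)
  rcases hsu.eq_or_lt with rfl | hsu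
  · rw [← add_mul, hab, one_mul]
    simp only [IsRoot, eval_sub, eval_mul, eval_C] at hs0 hu0 ⊢
    exact le_of_eq <| by linear_combination -a * hs0 - b * hu0 + P.eval s * hab
  obtain ⟨L, hL, hLeval⟩ := exists_natDegree_le_one_eval_combo hsu.ne l₁ l₂
  have hLs : L.eval s = l₁ := by simpa using hLeval 1 0 (by norm_num)
  have hLu : L.eval u = l₂ := by simpa using hLeval 0 1 (by norm_num)
  have hsec := (leadingCoeff_neg_and_eval_nonneg_of_sign h.lt_succ (h.sign_eval_sub_mul L)
    (h.natDegree_sub_mul_le hL) hs hsu (by simpa [hLs] using hs0) (by simpa [hLu] using hu0)).2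
  have ht : a * s + b * u ∈ Set.Icc s u := by
    simpa using convex_Icc s u ⟨le_rfl, hsu.le⟩ ⟨hsu.le, le_rfl⟩ ha hb hab
  simpa [hLeval a b hab] using hsec _ ht

theorem convexOn (h : IsInterlacing k y P Q) {m : ℝ → ℝ}
    (hm : ∀ l, (P - C l * Q).IsRoot (m l) ∧ ∀ t, (P - C l * Q).IsRoot t → t ≤ m l) :
    ConvexOn ℝ Set.univ m := by
  have hgt (l : ℝ) : y k < m l := h.lt_of_forall_isRoot_le (hm l).2
  refine ⟨convex_univ, fun l₁ _ l₂ _ a b ha hb hab => ?_⟩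
  exact h.le_of_isRoot_of_eval_nonneg (hm _).1
    (by simpa using convex_Ioi (y k) (hgt l₁) (hgt l₂) ha hb hab)
    (h.eval_convexCombination_nonneg (hgt l₁) (hgt l₂) (hm l₁).1 (hm l₂).1 ha hb hab)

end IsInterlacing

theorem largest_root_convex (n : ℕ) (hn : 2 ≤ n) (x y : ℕ → ℝ)
    (hx : ∀ i j, i < j → j < n → x i < x j)
    (hinter : ∀ i, i + 1 < n → x i < y i ∧ y i < x (i + 1))
    (P Q : Polynomial ℝ)
    (hP : P = ∏ i ∈ Finset.range n, (X - C (x i)))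
    (hQ : Q = C (n : ℝ) * ∏ i ∈ Finset.range (n - 1), (X - C (y i)))
    (m : ℝ → ℝ)
    (hm : ∀ l : ℝ, (P - C l * Q).IsRoot (m l) ∧
      ∀ t : ℝ, (P - C l * Q).IsRoot t → t ≤ m l) :
    ConvexOn ℝ Set.univ m := by
  obtain ⟨k, rfl⟩ : ∃ k, n = k + 2 := ⟨n - 2, by omega⟩
  subst hP hQ
  exact (IsInterlacing.of_prod hx hinter _).convexOn hm
end

section
/- For any monic hyperbolic polynomial P of degree n ≥ 1 and any real λ, the span of P is at most the span of P − λP′: Δ(P) ≤ Δ(P − λP′). -/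
/-!
Let `M` be the largest root of `P`, write `P = (X - M) R` and `Q = P - λ P'`. Then
`Q (M + λ) = -λ² R' (M + λ)`, which is `≤ 0` as soon as every root of `R` is `≤ M + λ`; as `Q` is
monic, `Q` then has a root `≥ M + λ`. For `λ ≥ 0` the condition on `R` is automatic. For `λ < 0`,
if `Q` had no root in `[M + λ, ∞)` then `Q > 0` there, so `x ↦ exp (-x / λ) P x`, whose derivative
is `-λ⁻¹ exp (-x / λ) Q x`, increases strictly on `[M + λ, M]` up to `0`: `P` has no root in
`[M + λ, M)`, and `M` is a simple root since otherwise `Q M = 0`. The reflection `x ↦ -x` turns this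
into a root of `Q` that is `≤ m + λ` for the smallest root `m` of `P`, and together
`Δ(Q) ≥ (M + λ) - (m + λ) = Δ(P)`.
-/

open Polynomial

/-- The span of a polynomial: the difference between its largest and smallest real roots. -/
noncomputable def polySpan (P : Polynomial ℝ) : ℝ :=
  sSup {t : ℝ | P.IsRoot t} - sInf {t : ℝ | P.IsRoot t}

open Filter Set

namespace Polynomial

theorem degree_C_mul_derivative_lt {R : Type*} [Semiring R] {p : R[X]} (hp : p ≠ 0) (a : R) :
    (C a * derivative p).degree < p.degree := by
  rw [← smul_eq_C_mul]
  exact (degree_smul_le a _).trans_lt (degree_derivative_lt hp)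

section Ring

variable {R : Type*} [Ring R] {p : R[X]}

theorem degree_sub_C_mul_derivative (hp : p ≠ 0) (a : R) :
    (p - C a * derivative p).degree = p.degree :=
  degree_sub_eq_left_of_degree_lt (degree_C_mul_derivative_lt hp a)

theorem Monic.sub_C_mul_derivative [Nontrivial R] (hp : p.Monic) (a : R) :
    (p - C a * derivative p).Monic :=
  hp.sub_of_left (degree_C_mul_derivative_lt hp.ne_zero a)

end Ring

section CommRing

variable {R : Type*} [CommRing R]

theorem eval_add_sub_C_mul_derivative_X_sub_C_mul (q : R[X]) (b a : R) :
    ((X - C b) * q - C a * derivative ((X - C b) * q)).eval (b + a) =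
      -(a ^ 2 * (derivative q).eval (b + a)) := by
  simp only [derivative_mul, derivative_sub, derivative_X, derivative_C, eval_sub, eval_mul,
    eval_add, eval_X, eval_C, sub_zero, one_mul]
  ring

theorem neg_one_pow_mul_comp_neg_X_sub_C_mul_derivative (p : R[X]) (n : ℕ) (a : R) :
    (-1) ^ n * p.comp (-X) - C (-a) * derivative ((-1) ^ n * p.comp (-X)) =
      (-1) ^ n * (p - C a * derivative p).comp (-X) := by
  have : derivative ((-1 : R[X]) ^ n) = 0 := by simp [derivative_pow]
  simp [derivative_comp, sub_comp, mul_comp, this]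
  ring

theorem isRoot_neg_one_pow_mul_comp_neg_X [IsDomain R] {p : R[X]} {n : ℕ} {x : R} :
    ((-1) ^ n * p.comp (-X)).IsRoot x ↔ p.IsRoot (-x) := by
  simp [IsRoot]

theorem Splits.eval_derivative_nonneg [NoZeroDivisors R] [LinearOrder R] [IsStrictOrderedRing R]
    {p : R[X]} (hp : p.Splits) (hlc : 0 ≤ p.leadingCoeff) {x : R} (hx : ∀ r ∈ p.roots, r ≤ x) :
    0 ≤ (derivative p).eval x := by
  classical
  rw [hp.eval_derivative]
  refine mul_nonneg hlc (Multiset.sum_nonneg fun _ h => ?_)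
  obtain ⟨r, -, rfl⟩ := Multiset.mem_map.1 h
  refine Multiset.prod_nonneg fun _ h => ?_
  obtain ⟨s, hs, rfl⟩ := Multiset.mem_map.1 h
  exact sub_nonneg.2 (hx s (Multiset.mem_of_mem_erase hs))

end CommRing

theorem exists_isRoot_ge_of_eval_nonpos {p : ℝ[X]} (hdeg : 0 < p.degree)
    (hlc : 0 ≤ p.leadingCoeff) {a : ℝ} (ha : p.eval a ≤ 0) : ∃ c, p.IsRoot c ∧ a ≤ c := by
  obtain ⟨b, hb, hab⟩ := ((p.tendsto_atTop_of_leadingCoeff_nonneg hdeg hlc).eventually_ge_atTop 0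
    |>.and (eventually_ge_atTop a)).exists
  obtain ⟨c, hc, hc0⟩ := intermediate_value_Icc hab p.continuous.continuousOn ⟨ha, hb⟩
  exact ⟨c, hc0, hc.1⟩

theorem hasDerivAt_exp_mul_eval (p : ℝ[X]) {a : ℝ} (ha : a ≠ 0) (x : ℝ) :
    HasDerivAt (fun y => Real.exp (-y / a) * p.eval y)
      (-a⁻¹ * Real.exp (-x / a) * (p - C a * derivative p).eval x) x := by
  refine (((hasDerivAt_id' x).neg.div_const a).exp.mul (p.hasDerivAt x)).congr_deriv ?_
  simp only [eval_sub, eval_mul, eval_C, Pi.neg_apply]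
  field_simp
  ring

theorem eval_neg_of_sub_C_mul_derivative_pos {p : ℝ[X]} {a x b : ℝ} (ha : a < 0) (hb : p.IsRoot b)
    (hxb : x < b) (hq : ∀ y ∈ Ioo x b, 0 < (p - C a * derivative p).eval y) :
    p.eval x < 0 := by
  have hderiv := hasDerivAt_exp_mul_eval p ha.ne
  have hmono : StrictMonoOn (fun y => Real.exp (-y / a) * p.eval y) (Icc x b) := by
    refine strictMonoOn_of_deriv_pos (convex_Icc x b)
      (fun y _ => (hderiv y).continuousAt.continuousWithinAt) fun y hy => ?_
    rw [interior_Icc] at hy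
    rw [(hderiv y).deriv]
    exact mul_pos (mul_pos (by simpa using ha) (Real.exp_pos _)) (hq y hy)
  have := hmono (left_mem_Icc.2 hxb.le) (right_mem_Icc.2 hxb.le) hxb
  simp only [hb.eq_zero, mul_zero] at this
  exact neg_of_mul_neg_right this (Real.exp_pos _).le

theorem isRoot_lt_of_sub_C_mul_derivative_pos {p r : ℝ[X]} {M a x : ℝ} (ha : a < 0)
    (hpr : p = (X - C M) * r) (hq : ∀ y ∈ Icc (M + a) M, 0 < (p - C a * derivative p).eval y)
    (hx : r.IsRoot x) (hxM : x ≤ M) : x < M + a := by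
  by_contra! hax
  rcases hxM.lt_or_eq with hxM | rfl
  · have hpM : p.IsRoot M := by simp [hpr]
    have hpx : p.eval x < 0 := eval_neg_of_sub_C_mul_derivative_pos ha hpM hxM
      fun y hy => hq y ⟨hax.trans hy.1.le, hy.2.le⟩
    exact hpx.ne (hx.dvd (hpr ▸ dvd_mul_left r _))
  · have := hq x ⟨hax, le_rfl⟩
    simp [hpr, hx.eq_zero] at this

theorem exists_isRoot_sub_C_mul_derivative_ge {p : ℝ[X]} (hp : p.Splits) (hmonic : p.Monic)
    {M : ℝ} (hM : p.IsRoot M) (hmax : ∀ x, p.IsRoot x → x ≤ M) (a : ℝ) :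
    ∃ c, (p - C a * derivative p).IsRoot c ∧ M + a ≤ c := by
  by_contra! hq
  have hq_pos : ∀ x, M + a ≤ x → 0 < (p - C a * derivative p).eval x := by
    intro x hx
    by_contra! hqx
    have hdeg : 0 < (p - C a * derivative p).degree := by
      rw [degree_sub_C_mul_derivative hmonic.ne_zero]
      exact degree_pos_of_root hmonic.ne_zero hM
    obtain ⟨c, hc, hxc⟩ := exists_isRoot_ge_of_eval_nonpos hdeg
      ((hmonic.sub_C_mul_derivative a).leadingCoeff ▸ zero_le_one) hqx
    exact (hq c hc).not_ge (hx.trans hxc)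
  obtain ⟨r, hpr⟩ := dvd_iff_isRoot.2 hM
  have hr_roots : ∀ x ∈ r.roots, x ≤ M + a := by
    intro x hx
    have hrx : r.IsRoot x := isRoot_of_mem_roots hx
    have hxM : x ≤ M := hmax x (hrx.dvd (hpr ▸ dvd_mul_left r _))
    rcases le_or_gt 0 a with ha | ha
    · linarith
    · exact (isRoot_lt_of_sub_C_mul_derivative_pos ha hpr (fun y hy => hq_pos y hy.1) hrx hxM).le
  have hr : r.Splits := splits_X_sub_C_mul_iff.1 (hpr ▸ hp)
  have hr_monic : r.Monic := (monic_X_sub_C M).of_mul_monic_left (hpr ▸ hmonic)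
  have hr' : 0 ≤ (derivative r).eval (M + a) :=
    hr.eval_derivative_nonneg (hr_monic.leadingCoeff ▸ zero_le_one) hr_roots
  have hqs := hq_pos (M + a) le_rfl
  rw [hpr, eval_add_sub_C_mul_derivative_X_sub_C_mul] at hqs
  nlinarith [sq_nonneg a]

theorem exists_isRoot_sub_C_mul_derivative_le {p : ℝ[X]} (hp : p.Splits) (hmonic : p.Monic)
    {m : ℝ} (hm : p.IsRoot m) (hmin : ∀ x, p.IsRoot x → m ≤ x) (a : ℝ) :
    ∃ c, (p - C a * derivative p).IsRoot c ∧ c ≤ m + a := by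
  have hps : ((-1) ^ p.natDegree * p.comp (-X)).Splits := (Splits.one.neg.pow _).mul hp.comp_neg_X
  obtain ⟨c, hc, hmc⟩ := exists_isRoot_sub_C_mul_derivative_ge hps
    hmonic.neg_one_pow_natDegree_mul_comp_neg_X (isRoot_neg_one_pow_mul_comp_neg_X.2 (by simpa))
    (fun x hx => le_neg.2 (hmin _ (isRoot_neg_one_pow_mul_comp_neg_X.1 hx))) (-a)
  rw [neg_one_pow_mul_comp_neg_X_sub_C_mul_derivative, isRoot_neg_one_pow_mul_comp_neg_X] at hc
  exact ⟨-c, hc, by linarith⟩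

end Polynomial

theorem sub_le_polySpan {p : ℝ[X]} (hp : p ≠ 0) {a b : ℝ} (ha : p.IsRoot a) (hb : p.IsRoot b) :
    b - a ≤ polySpan p :=
  sub_le_sub (le_csSup (finite_setOfPred_isRoot hp).bddAbove hb)
    (csInf_le (finite_setOfPred_isRoot hp).bddBelow ha)

theorem span_le_span_shifted (n : ℕ) (hn : 1 ≤ n) (P : Polynomial ℝ)
    (hPm : P.Monic) (hPd : P.natDegree = n) (hhyp : P.roots.card = n) (l : ℝ) :
    polySpan P ≤ polySpan (P - C l * Polynomial.derivative P) := by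
  have hP : P.Splits := splits_iff_card_roots.2 (hhyp.trans hPd.symm)
  have hroots : {t | P.IsRoot t}.Nonempty :=
    hP.exists_eval_eq_zero (natDegree_pos_iff_degree_pos.1 (by omega)).ne'
  have hfin := finite_setOfPred_isRoot hPm.ne_zero
  obtain ⟨c, hc, hMc⟩ := exists_isRoot_sub_C_mul_derivative_ge hP hPm (hroots.csSup_mem hfin)
    (fun x hx => le_csSup hfin.bddAbove hx) l
  obtain ⟨c', hc', hmc'⟩ := exists_isRoot_sub_C_mul_derivative_le hP hPm (hroots.csInf_mem hfin)
    (fun x hx => csInf_le hfin.bddBelow hx) l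
  calc polySpan P = (sSup {t | P.IsRoot t} + l) - (sInf {t | P.IsRoot t} + l) := by
        rw [polySpan]; ring
    _ ≤ c - c' := sub_le_sub hMc hmc'
    _ ≤ _ := sub_le_polySpan (hPm.sub_C_mul_derivative l).ne_zero hc' hc
end

section
/- Let P be a monic hyperbolic polynomial of degree n and λ₁, λ₂ real numbers with λ₁λ₂ ≥ 0 and |λ₁| ≤ |λ₂|. Then Δ(P − λ₁P′) ≤ Δ(P − λ₂P′). -/
open Polynomial

/-!
Write `Q_c = P - c P'` (`P.subDeriv c`). Off the roots `x₁ ≤ ⋯ ≤ xₙ` of `P`,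
`Q_c = P · (1 - c H)` with `H x = ∑ 1 / (x - xᵢ)`. The reflection `x ↦ -x` turns `Q_c` into
`Q_{-c}`, so it suffices to take `0 ≤ λ ≤ μ` and to show that going from `Q_λ` to `Q_μ` moves the
largest root to the right by at least `μ - λ` and the smallest root by at most `μ - λ`.

At the largest root `b > xₙ` of `Q_λ` we have `λ H b = 1`, and the termwise bound
`1 / (b + μ - λ - xᵢ) ≥ (λ / μ) / (b - xᵢ)` gives `μ H (b + μ - λ) ≥ 1`, so `Q_μ ≤ 0` there.
At the smallest root `a` of `Q_λ`, either another root of `P` lies in `(x₁, a + μ - λ]` and Rolle's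
theorem for `e^{-x/μ} P` gives a root of `Q_μ` before it, or `μ H (a + μ - λ) ≤ 1`, which makes
`Q_μ` change sign on `[x₁, a + μ - λ]`.
-/

open Set

theorem add_mul_inv_add_add_le_one {α h d l : ℝ} (hα : 0 < α) (hh : h ≤ 0) (hd : 0 ≤ d) (hl : 0 ≤ l)
    (heq : l * (α⁻¹ + h) = 1) : (l + d) * ((α + d)⁻¹ + h) ≤ 1 := by
  have hl' : 0 < l := hl.lt_of_ne (by rintro rfl; simp at heq)
  have hh' : h = l⁻¹ - α⁻¹ := by rw [← eq_inv_of_mul_eq_one_right heq]; ring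
  have hαl : α ≤ l := by
    rw [← inv_le_inv₀ hl' hα]; linarith
  have hexpand : (l + d) * ((α + d)⁻¹ + (l⁻¹ - α⁻¹)) =
      1 - d * (l - α) * (l + α + d) / (l * α * (α + d)) := by
    field_simp; ring
  rw [hh', hexpand, sub_le_self_iff]
  have : 0 ≤ l - α := by linarith
  positivity

namespace Polynomial

noncomputable def subDeriv (p : ℝ[X]) (c : ℝ) : ℝ[X] := p - C c * derivative p

variable {p : ℝ[X]} {s t : Multiset ℝ} {a b c u v x x₁ l₁ l₂ : ℝ}

theorem subDeriv_C_mul (a : ℝ) (p : ℝ[X]) (c : ℝ) : (C a * p).subDeriv c = C a * p.subDeriv c := by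
  simp only [subDeriv, derivative_C_mul]
  ring

theorem subDeriv_comp_neg_X (p : ℝ[X]) (c : ℝ) :
    (p.comp (-X)).subDeriv c = (p.subDeriv (-c)).comp (-X) := by
  simp only [subDeriv, derivative_comp, sub_comp, mul_comp, C_comp, derivative_neg, derivative_X,
    C_neg, neg_comp]
  ring

theorem Monic.subDeriv (hp : p.Monic) (c : ℝ) : (p.subDeriv c).Monic :=
  hp.sub_of_left <| by
    rw [← smul_eq_C_mul]
    exact (degree_smul_le _ _).trans_lt (degree_derivative_lt hp.ne_zero)

theorem polySpan_C_mul (ha : a ≠ 0) (p : ℝ[X]) : polySpan (C a * p) = polySpan p := by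
  simp [polySpan, ha]

theorem polySpan_comp_neg_X (p : ℝ[X]) : polySpan (p.comp (-X)) = polySpan p := by
  have hroots : {t | (p.comp (-X)).IsRoot t} = -{t | p.IsRoot t} := by ext; simp
  rw [polySpan, polySpan, hroots, Real.sInf_def (-_), neg_neg, Real.sInf_def {t | p.IsRoot t}]
  ring

theorem exists_isRoot_ge_of_eval_nonpos_s7 (hp : p.Monic) (hu : eval u p ≤ 0) :
    ∃ w, u ≤ w ∧ p.IsRoot w := by
  have hdeg : 0 < p.degree := by
    by_contra! h
    rw [eq_one_of_monic_natDegree_zero hp (natDegree_eq_zero_iff_degree_le_zero.2 h)] at hu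
    norm_num at hu
  have hlim := tendsto_atTop_of_leadingCoeff_nonneg p hdeg (by simp [hp.leadingCoeff])
  obtain ⟨z, hz, huz⟩ := ((hlim.eventually_ge_atTop 0).and (Filter.eventually_ge_atTop u)).exists
  obtain ⟨w, hw, hw0⟩ := intermediate_value_Icc huz p.continuous.continuousOn ⟨hu, hz⟩
  exact ⟨w, hw.1, hw0⟩

theorem exists_isRoot_mem_Icc_of_eval_mul_nonpos (hab : a ≤ b) (h : eval a p * eval b p ≤ 0) :
    ∃ w ∈ Icc a b, p.IsRoot w := by
  rcases mul_nonpos_iff.mp h with ⟨ha, hb⟩ | ⟨ha, hb⟩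
  · exact intermediate_value_Icc' hab p.continuous.continuousOn ⟨hb, ha⟩
  · exact intermediate_value_Icc hab p.continuous.continuousOn ⟨ha, hb⟩

/-- Rolle's theorem for `x ↦ exp (-x / c) * p x`, whose derivative is
`-c⁻¹ * exp (-x / c) * (p - c p') x`. -/
theorem exists_isRoot_subDeriv_mem_Ioo (hc : c ≠ 0) (hu : p.IsRoot u) (hv : p.IsRoot v)
    (huv : u < v) : ∃ w ∈ Ioo u v, (p.subDeriv c).IsRoot w := by
  have hderiv : ∀ x, HasDerivAt (fun y => Real.exp (-y / c) * eval y p)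
      (-c⁻¹ * Real.exp (-x / c) * eval x (p.subDeriv c)) x := by
    intro x
    refine ((((hasDerivAt_id x).neg.div_const c).exp).mul (p.hasDerivAt x)).congr_deriv ?_
    simp only [subDeriv, eval_sub, eval_mul, eval_C, id, Pi.neg_apply]
    field_simp
    ring
  obtain ⟨w, hw, hw0⟩ := exists_hasDerivAt_eq_zero huv (by fun_prop)
    (by simp [hu.eq_zero, hv.eq_zero]) fun x _ => hderiv x
  exact ⟨w, hw, by simpa [hc, (Real.exp_pos _).ne'] using hw0⟩

theorem isRoot_multiset_prod_X_sub_C_iff :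
    (s.map fun r => X - C r).prod.IsRoot x ↔ x ∈ s := by
  rw [← mem_roots (monic_multiset_prod_of_monic _ _ fun r _ => monic_X_sub_C r).ne_zero,
    roots_multiset_prod_X_sub_C]

theorem eval_multiset_prod_X_sub_C_pos (h : ∀ r ∈ s, r < x) :
    0 < eval x (s.map fun r => X - C r).prod := by
  rw [eval_multiset_prod, Multiset.map_map]
  exact Multiset.prod_pos fun y hy => by
    obtain ⟨r, hr, rfl⟩ := Multiset.mem_map.mp hy
    simpa using h r hr

theorem eval_derivative_multiset_prod_X_sub_C (h : ∀ r ∈ s, r ≠ x) :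
    eval x (derivative (s.map fun r => X - C r).prod) =
      eval x (s.map fun r => X - C r).prod * (s.map fun r => (x - r)⁻¹).sum := by
  induction s using Multiset.induction_on with
  | empty => simp
  | cons a s ih =>
    have ha : x - a ≠ 0 := sub_ne_zero.mpr (h a (Multiset.mem_cons_self a s)).symm
    simp only [Multiset.map_cons, Multiset.prod_cons, Multiset.sum_cons, derivative_mul,
      derivative_X_sub_C, eval_add, eval_mul, eval_sub, eval_X, eval_C,
      eval_one, ih fun r hr => h r (Multiset.mem_cons_of_mem hr)]
    field_simp

theorem eval_subDeriv_multiset_prod_X_sub_C (c : ℝ) (h : ∀ r ∈ s, r ≠ x) :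
    eval x ((s.map fun r => X - C r).prod.subDeriv c) =
      eval x (s.map fun r => X - C r).prod * (1 - c * (s.map fun r => (x - r)⁻¹).sum) := by
  rw [subDeriv, eval_sub, eval_mul, eval_C, eval_derivative_multiset_prod_X_sub_C h]
  ring

theorem exists_le_of_isRoot_subDeriv_multiset_prod (h₁ : 0 ≤ l₁)
    (ha : ((s.map fun r => X - C r).prod.subDeriv l₁).IsRoot a) : ∃ r ∈ s, r ≤ a := by
  by_contra! h
  rw [IsRoot, eval_subDeriv_multiset_prod_X_sub_C l₁ fun r hr => (h r hr).ne'] at ha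
  have hP : eval a (s.map fun r => X - C r).prod ≠ 0 := fun h0 =>
    (h a (isRoot_multiset_prod_X_sub_C_iff.mp h0)).false
  have hH : (s.map fun r => (a - r)⁻¹).sum ≤ 0 := by
    simpa using Multiset.sum_map_le_sum_map _ (fun _ => (0 : ℝ))
      fun r hr => (inv_neg''.mpr (sub_neg.mpr (h r hr))).le
  have : 0 < 1 - l₁ * (s.map fun r => (a - r)⁻¹).sum := by nlinarith
  exact (mul_ne_zero hP this.ne') ha

theorem one_le_mul_sum_inv_sub_add (h₁ : 0 ≤ l₁) (h₁₂ : l₁ < l₂) (hbr : ∀ r ∈ s, r < b)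
    (hHb : l₁ * (s.map fun r => (b - r)⁻¹).sum = 1) :
    1 ≤ l₂ * (s.map fun r => (b + (l₂ - l₁) - r)⁻¹).sum := by
  have hl₁ : 0 < l₁ := h₁.lt_of_ne (by rintro rfl; simp at hHb)
  have hl₂ : 0 < l₂ := hl₁.trans h₁₂
  have hterm : ∀ r ∈ s, l₁ / l₂ * (b - r)⁻¹ ≤ (b + (l₂ - l₁) - r)⁻¹ := by
    intro r hr
    have hbr' : 0 < b - r := sub_pos.mpr (hbr r hr)
    have hle : l₁ ≤ b - r := by
      have := Multiset.single_le_sum (fun y hy => by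
        obtain ⟨r, hr, rfl⟩ := Multiset.mem_map.mp hy
        exact (inv_pos.mpr (sub_pos.mpr (hbr r hr))).le) _ (Multiset.mem_map_of_mem _ hr)
      rwa [eq_inv_of_mul_eq_one_right hHb, inv_le_inv₀ hbr' hl₁] at this
    rw [← div_eq_mul_inv, div_div, div_le_iff₀ (by positivity), inv_mul_eq_div,
      le_div_iff₀ (by linarith)]
    nlinarith [mul_le_mul_of_nonneg_left hle (sub_nonneg.mpr h₁₂.le)]
  calc (1 : ℝ) = l₂ * (l₁ / l₂ * (s.map fun r => (b - r)⁻¹).sum) := by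
        rw [← mul_assoc, mul_div_cancel₀ _ hl₂.ne', hHb]
    _ ≤ l₂ * (s.map fun r => (b + (l₂ - l₁) - r)⁻¹).sum := by
        refine mul_le_mul_of_nonneg_left ?_ hl₂.le
        rw [← Multiset.sum_map_mul_left]
        exact Multiset.sum_map_le_sum_map _ _ hterm

theorem exists_isRoot_subDeriv_multiset_prod_ge (h₁ : 0 ≤ l₁) (h₁₂ : l₁ ≤ l₂)
    (hb : ∀ r ∈ s, r ≤ b) (hroot : ((s.map fun r => X - C r).prod.subDeriv l₁).IsRoot b) :
    ∃ w, b + (l₂ - l₁) ≤ w ∧ ((s.map fun r => X - C r).prod.subDeriv l₂).IsRoot w := by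
  rcases h₁₂.eq_or_lt with rfl | h₁₂
  · exact ⟨b, by simp, hroot⟩
  have hS : ∀ r ∈ s, r < b + (l₂ - l₁) := fun r hr => by linarith [hb r hr]
  refine exists_isRoot_ge_of_eval_nonpos_s7
    ((monic_multiset_prod_of_monic _ _ fun r _ => monic_X_sub_C r).subDeriv l₂) ?_
  rw [eval_subDeriv_multiset_prod_X_sub_C l₂ fun r hr => (hS r hr).ne]
  refine mul_nonpos_of_nonneg_of_nonpos (eval_multiset_prod_X_sub_C_pos hS).le ?_
  suffices 1 ≤ l₂ * (s.map fun r => (b + (l₂ - l₁) - r)⁻¹).sum by linarith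
  by_cases hbs : b ∈ s
  · have hrest : 0 ≤ ((s.erase b).map fun r => (b + (l₂ - l₁) - r)⁻¹).sum :=
      Multiset.sum_nonneg fun y hy => by
        obtain ⟨r, hr, rfl⟩ := Multiset.mem_map.mp hy
        exact (inv_pos.mpr (sub_pos.mpr (hS r (Multiset.mem_of_mem_erase hr)))).le
    rw [← Multiset.cons_erase hbs, Multiset.map_cons, Multiset.sum_cons, add_sub_cancel_left,
      mul_add]
    have : 1 ≤ l₂ * (l₂ - l₁)⁻¹ := by
      rw [← div_eq_mul_inv, one_le_div (by linarith)]
      linarith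
    nlinarith
  · have hbr : ∀ r ∈ s, r < b := fun r hr => (hb r hr).lt_of_ne fun h => hbs (h ▸ hr)
    rw [IsRoot, eval_subDeriv_multiset_prod_X_sub_C l₁ fun r hr => (hbr r hr).ne] at hroot
    refine one_le_mul_sum_inv_sub_add h₁ h₁₂ hbr ?_
    linarith [(mul_eq_zero.mp hroot).resolve_left (eval_multiset_prod_X_sub_C_pos hbr).ne']

theorem eval_subDeriv_multiset_prod_X_sub_C_cons_self (c : ℝ) :
    eval x₁ (((x₁ ::ₘ t).map fun r => X - C r).prod.subDeriv c) =
      -(c * eval x₁ (t.map fun r => X - C r).prod) := by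
  simp [subDeriv, derivative_mul]

theorem mul_sum_inv_sub_cons_le_one (h₁ : 0 ≤ l₁) (h₁₂ : l₁ < l₂) (hx₁a : x₁ ≤ a)
    (ht : ∀ r ∈ t, a + (l₂ - l₁) < r)
    (ha : (((x₁ ::ₘ t).map fun r => X - C r).prod.subDeriv l₁).IsRoot a) :
    l₂ * ((a + (l₂ - l₁) - x₁)⁻¹ + (t.map fun r => (a + (l₂ - l₁) - r)⁻¹).sum) ≤ 1 := by
  set S := a + (l₂ - l₁)
  set Ht : ℝ → ℝ := fun y => (t.map fun r => (y - r)⁻¹).sum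
  have hHt : Ht S ≤ Ht a := Multiset.sum_map_le_sum_map _ _ fun r hr =>
    (inv_le_inv_of_neg (by linarith [ht r hr]) (by linarith [ht r hr])).mpr (by linarith)
  have hHt0 : Ht a ≤ 0 := by
    simpa using Multiset.sum_map_le_sum_map _ (fun _ => (0 : ℝ))
      fun r hr => (inv_neg''.mpr (by linarith [ht r hr])).le
  rcases hx₁a.eq_or_lt with rfl | hx₁a
  · have hl₁ : l₁ = 0 := by
      have hR : eval x₁ (t.map fun r => X - C r).prod ≠ 0 := fun h => by
        linarith [ht x₁ (isRoot_multiset_prod_X_sub_C_iff.mp h)]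
      rw [IsRoot, eval_subDeriv_multiset_prod_X_sub_C_cons_self, neg_eq_zero] at ha
      exact (mul_eq_zero.mp ha).resolve_right hR
    subst hl₁
    rw [show S - x₁ = l₂ by simp [S], mul_add, mul_inv_cancel₀ h₁₂.ne']
    nlinarith
  · have hna : ∀ r ∈ x₁ ::ₘ t, r ≠ a := by
      simp only [Multiset.mem_cons, forall_eq_or_imp]
      exact ⟨hx₁a.ne, fun r hr => (show a < r by linarith [ht r hr]).ne'⟩
    rw [IsRoot, eval_subDeriv_multiset_prod_X_sub_C l₁ hna] at ha
    have hPa : eval a ((x₁ ::ₘ t).map fun r => X - C r).prod ≠ 0 := fun h =>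
      hna a (isRoot_multiset_prod_X_sub_C_iff.mp h) rfl
    have heq := (mul_eq_zero.mp ha).resolve_left hPa
    rw [Multiset.map_cons, Multiset.sum_cons] at heq
    have := add_mul_inv_add_add_le_one (sub_pos.mpr hx₁a) hHt0 (sub_nonneg.mpr h₁₂.le) h₁
      (by linarith)
    rw [add_sub_cancel, show a - x₁ + (l₂ - l₁) = S - x₁ by ring] at this
    nlinarith

theorem exists_isRoot_subDeriv_multiset_prod_cons_mem_Icc (h₁ : 0 ≤ l₁) (h₁₂ : l₁ < l₂) (hx₁a : x₁ ≤ a)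
    (ht : ∀ r ∈ t, a + (l₂ - l₁) < r)
    (ha : (((x₁ ::ₘ t).map fun r => X - C r).prod.subDeriv l₁).IsRoot a) :
    ∃ w ∈ Icc x₁ (a + (l₂ - l₁)),
      (((x₁ ::ₘ t).map fun r => X - C r).prod.subDeriv l₂).IsRoot w := by
  set S := a + (l₂ - l₁)
  set R := (t.map fun r => X - C r).prod
  have hx₁S : x₁ < S := by linarith
  have hR : 0 < eval x₁ R * eval S R := by
    simp only [R, eval_multiset_prod, Multiset.map_map, ← Multiset.prod_map_mul]
    refine Multiset.prod_pos fun y hy => ?_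
    obtain ⟨r, hr, rfl⟩ := Multiset.mem_map.mp hy
    simp only [Function.comp, eval_sub, eval_X, eval_C]
    exact mul_pos_of_neg_of_neg (by linarith [ht r hr]) (by linarith [ht r hr])
  have hS : ∀ r ∈ x₁ ::ₘ t, r ≠ S := by
    simp only [Multiset.mem_cons, forall_eq_or_imp]
    exact ⟨hx₁S.ne, fun r hr => (ht r hr).ne'⟩
  have hfactor : 0 ≤ l₂ * (S - x₁) *
      (1 - l₂ * ((S - x₁)⁻¹ + (t.map fun r => (S - r)⁻¹).sum)) := by
    have : 0 < l₂ := h₁.trans_lt h₁₂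
    have : 0 < S - x₁ := sub_pos.mpr hx₁S
    have := sub_nonneg.mpr (mul_sum_inv_sub_cons_le_one h₁ h₁₂ hx₁a ht ha)
    positivity
  apply exists_isRoot_mem_Icc_of_eval_mul_nonpos hx₁S.le
  rw [eval_subDeriv_multiset_prod_X_sub_C_cons_self, eval_subDeriv_multiset_prod_X_sub_C l₂ hS]
  simp only [Multiset.map_cons, Multiset.prod_cons, Multiset.sum_cons, eval_mul, eval_sub,
    eval_X, eval_C]
  linarith [mul_nonneg hfactor hR.le]

theorem exists_isRoot_subDeriv_multiset_prod_le (h₁ : 0 ≤ l₁) (h₁₂ : l₁ ≤ l₂)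
    (hx₁ : x₁ ∈ s) (hmin : ∀ r ∈ s, x₁ ≤ r)
    (ha : ((s.map fun r => X - C r).prod.subDeriv l₁).IsRoot a) :
    ∃ w, w ≤ a + (l₂ - l₁) ∧ ((s.map fun r => X - C r).prod.subDeriv l₂).IsRoot w := by
  rcases h₁₂.eq_or_lt with rfl | h₁₂
  · exact ⟨a, by simp, ha⟩
  have hx₁a : x₁ ≤ a := by
    obtain ⟨r, hr, hra⟩ := exists_le_of_isRoot_subDeriv_multiset_prod h₁ ha
    exact (hmin r hr).trans hra
  obtain ⟨t, rfl⟩ : ∃ t, s = x₁ ::ₘ t := ⟨_, (Multiset.cons_erase hx₁).symm⟩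
  by_cases ht : ∀ r ∈ t, a + (l₂ - l₁) < r
  · obtain ⟨w, hw, hroot⟩ := exists_isRoot_subDeriv_multiset_prod_cons_mem_Icc h₁ h₁₂ hx₁a ht ha
    exact ⟨w, hw.2, hroot⟩
  push Not at ht
  obtain ⟨r, hr, hra⟩ := ht
  rcases (hmin r (Multiset.mem_cons_of_mem hr)).eq_or_lt with rfl | hx₁r
  · -- `x₁` is a multiple root, hence also a root of the derivative
    refine ⟨x₁, by linarith, ?_⟩
    rw [IsRoot, eval_subDeriv_multiset_prod_X_sub_C_cons_self,
      (isRoot_multiset_prod_X_sub_C_iff.mpr hr).eq_zero, mul_zero, neg_zero]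
  · obtain ⟨w, hw, hroot⟩ := exists_isRoot_subDeriv_mem_Ioo (h₁.trans_lt h₁₂).ne'
      (isRoot_multiset_prod_X_sub_C_iff.mpr (Multiset.mem_cons_self _ _))
      (isRoot_multiset_prod_X_sub_C_iff.mpr (Multiset.mem_cons_of_mem hr)) hx₁r
    exact ⟨w, by linarith [hw.2], hroot⟩

theorem polySpan_subDeriv_multiset_prod_mono (s : Multiset ℝ) (h₁ : 0 ≤ l₁) (h₁₂ : l₁ ≤ l₂) :
    polySpan ((s.map fun r => X - C r).prod.subDeriv l₁) ≤
      polySpan ((s.map fun r => X - C r).prod.subDeriv l₂) := by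
  rcases s.empty_or_exists_mem with rfl | ⟨r₀, hr₀⟩
  · simp [subDeriv]
  set P := (s.map fun r => X - C r).prod
  have hfin : ∀ l, {t | (P.subDeriv l).IsRoot t}.Finite := fun l =>
    finite_setOfPred_isRoot
      ((monic_multiset_prod_of_monic _ _ fun r _ => monic_X_sub_C r).subDeriv l).ne_zero
  obtain ⟨xₙ, hxₙ, hmax⟩ := s.toFinset.exists_max_image id ⟨r₀, Multiset.mem_toFinset.mpr hr₀⟩
  obtain ⟨x₁, hx₁, hmin⟩ := s.toFinset.exists_min_image id ⟨r₀, Multiset.mem_toFinset.mpr hr₀⟩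
  simp only [Multiset.mem_toFinset, id] at hxₙ hmax hx₁ hmin
  obtain ⟨w₀, hxₙw₀, hw₀⟩ := exists_isRoot_subDeriv_multiset_prod_ge le_rfl h₁ hmax
    (by simpa [subDeriv] using isRoot_multiset_prod_X_sub_C_iff.mpr hxₙ)
  have hne : {t | (P.subDeriv l₁).IsRoot t}.Nonempty := ⟨w₀, hw₀⟩
  have hw₀b : w₀ ≤ sSup {t | (P.subDeriv l₁).IsRoot t} := le_csSup (hfin l₁).bddAbove hw₀
  obtain ⟨w₁, hw₁, hw₁root⟩ := exists_isRoot_subDeriv_multiset_prod_ge h₁ h₁₂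
    (fun r hr => by linarith [hmax r hr]) (hne.csSup_mem (hfin l₁))
  obtain ⟨w₂, hw₂, hw₂root⟩ :=
    exists_isRoot_subDeriv_multiset_prod_le h₁ h₁₂ hx₁ hmin (hne.csInf_mem (hfin l₁))
  have := le_csSup (hfin l₂).bddAbove hw₁root
  have := csInf_le (hfin l₂).bddBelow hw₂root
  rw [polySpan, polySpan]
  linarith

theorem polySpan_subDeriv_mono_of_nonneg {P : ℝ[X]} (hP : P.roots.card = P.natDegree)
    (h₁ : 0 ≤ l₁) (h₁₂ : l₁ ≤ l₂) : polySpan (P.subDeriv l₁) ≤ polySpan (P.subDeriv l₂) := by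
  rw [← C_leadingCoeff_mul_prod_multiset_X_sub_C hP, subDeriv_C_mul, subDeriv_C_mul]
  rcases eq_or_ne P.leadingCoeff 0 with h | h
  · simp [h]
  · rw [polySpan_C_mul h, polySpan_C_mul h]
    exact polySpan_subDeriv_multiset_prod_mono _ h₁ h₁₂

end Polynomial

theorem span_monotone_general (n : ℕ) (P : Polynomial ℝ)
    (hPd : P.natDegree = n) (hhyp : P.roots.card = n)
    (l₁ l₂ : ℝ) (hll : 0 ≤ l₁ * l₂) (habs : |l₁| ≤ |l₂|) :
    polySpan (P - C l₁ * Polynomial.derivative P) ≤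
      polySpan (P - C l₂ * Polynomial.derivative P) := by
  have hP : P.roots.card = P.natDegree := hhyp.trans hPd.symm
  change polySpan (P.subDeriv l₁) ≤ polySpan (P.subDeriv l₂)
  rcases le_total 0 l₂ with h₂ | h₂
  · have h₁ : 0 ≤ l₁ := by
      rcases h₂.eq_or_lt with rfl | h₂
      · simp only [abs_zero, abs_nonpos_iff] at habs
        exact habs.ge
      · exact nonneg_of_mul_nonneg_left hll h₂
    rw [abs_of_nonneg h₁, abs_of_nonneg h₂] at habs
    exact polySpan_subDeriv_mono_of_nonneg hP h₁ habs
  · have h₁ : l₁ ≤ 0 := by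
      rcases h₂.eq_or_lt with rfl | h₂
      · simp only [abs_zero, abs_nonpos_iff] at habs
        exact habs.le
      · exact nonpos_of_mul_nonneg_left hll h₂
    rw [abs_of_nonpos h₁, abs_of_nonpos h₂] at habs
    have hPr : (P.comp (-X)).roots.card = (P.comp (-X)).natDegree := by
      simp [roots_comp_neg_X, natDegree_comp, hP]
    have := polySpan_subDeriv_mono_of_nonneg hPr (neg_nonneg.mpr h₁) habs
    rwa [subDeriv_comp_neg_X, subDeriv_comp_neg_X, neg_neg, neg_neg, polySpan_comp_neg_X,
      polySpan_comp_neg_X] at this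

theorem span_monotone (n : ℕ) (hn : 1 ≤ n) (P : Polynomial ℝ)
    (hPm : P.Monic) (hPd : P.natDegree = n) (hhyp : P.roots.card = n)
    (l₁ l₂ : ℝ) (hll : 0 ≤ l₁ * l₂) (habs : |l₁| ≤ |l₂|) :
    polySpan (P - C l₁ * Polynomial.derivative P) ≤
      polySpan (P - C l₂ * Polynomial.derivative P) :=
  span_monotone_general n P hPd hhyp l₁ l₂ hll habs
end

section
/- Let P be a monic strictly hyperbolic polynomial of degree n ≥ 2 with roots x_1 < … < x_n, and for λ ∈ ℝ let ζ_1(λ) < … < ζ_n(λ) be the roots of P − λP′ with ζ_i(0) = x_i. Then for every real λ and every j ∈ {1,…,n−1}, Σ_{i=1}^{j} (ζ_i(λ) − λ) ≤ Σ_{i=1}^{j} x_i; together with Σ_{i=1}^{n}(ζ_i(λ) − λ) = Σ_{i=1}^{n} x_i, this means the roots of P(x+λ) − λP′(x+λ) majorize the roots of P. -/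
/-!
For `λ ≠ 0`, a root `ζ` of `P - λP'` is not a root of `P` (the roots of `P` are simple), so dividing
by `P(ζ)` gives the secular equation `λ ∑ₖ 1/(ζ - xₖ) = 1`. Hence `ζ` is an eigenvalue of the
rank-one perturbation `diag x + λ𝟙𝟙ᵀ`, with eigenvector `(1/(ζ - xₖ))ₖ`. Any two of these vectors
are orthogonal by partial fractions, so normalizing them gives an orthogonal matrix `W` with
`Wᵀ diag(ζ) W = diag x + λ𝟙𝟙ᵀ`. Reading off the diagonal, `xₖ + λ = ∑ᵢ ζᵢ Wᵢₖ²`, and `(Wᵢₖ²)` is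
doubly stochastic. A vector obtained from `ζ` by a doubly stochastic matrix is majorized by `ζ`
(the easy half of Hardy–Littlewood–Pólya), which gives the claim.
-/

open Polynomial Finset Matrix

namespace Lagrange

variable {F ι : Type*} [Field F] [DecidableEq ι] {s : Finset ι} {v : ι → F} {z l : F}

theorem eval_derivative_nodal_of_ne (hz : ∀ i ∈ s, z ≠ v i) :
    eval z (derivative (nodal s v)) = eval z (nodal s v) * ∑ i ∈ s, (z - v i)⁻¹ := by
  rw [derivative_nodal, eval_finsetSum, mul_sum]
  refine sum_congr rfl fun i hi => ?_
  rw [nodal_eq_mul_nodal_erase hi, eval_mul, eval_sub, eval_X, eval_C,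
    mul_right_comm, mul_inv_cancel₀ (sub_ne_zero.mpr (hz i hi)), one_mul]

theorem eval_derivative_nodal_at_node_ne_zero (hvs : Set.InjOn v s) {i : ι} (hi : i ∈ s) :
    eval (v i) (derivative (nodal s v)) ≠ 0 := fun h =>
  nodalWeight_ne_zero hvs hi (by rw [nodalWeight_eq_eval_derivative_nodal hi, h, _root_.inv_zero])

theorem ne_of_isRoot_sub_C_mul_derivative (hvs : Set.InjOn v s) (hl : l ≠ 0)
    (hz : (nodal s v - C l * derivative (nodal s v)).IsRoot z) : ∀ i ∈ s, z ≠ v i := by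
  rintro i hi rfl
  rw [IsRoot, eval_sub, eval_mul, eval_C, eval_nodal_at_node hi, zero_sub, neg_eq_zero] at hz
  exact eval_derivative_nodal_at_node_ne_zero hvs hi ((mul_eq_zero.mp hz).resolve_left hl)

theorem mul_sum_inv_sub_eq_one_of_isRoot (hvs : Set.InjOn v s) (hl : l ≠ 0)
    (hz : (nodal s v - C l * derivative (nodal s v)).IsRoot z) :
    l * ∑ i ∈ s, (z - v i)⁻¹ = 1 := by
  have hne := ne_of_isRoot_sub_C_mul_derivative hvs hl hz
  rw [IsRoot, eval_sub, eval_mul, eval_C, eval_derivative_nodal_of_ne hne, sub_eq_zero] at hz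
  have hP : eval z (nodal s v) ≠ 0 := eval_nodal_not_at_node hne
  apply mul_left_cancel₀ hP
  linear_combination hz.symm

end Lagrange

theorem Matrix.map_sq_mem_doublyStochastic {ι : Type*} [Fintype ι] [DecidableEq ι]
    {W : Matrix ι ι ℝ} (hW : W ∈ orthogonalGroup ι ℝ) : W.map (· ^ 2) ∈ doublyStochastic ℝ ι := by
  rw [mem_doublyStochastic_iff_sum]
  refine ⟨fun i j => sq_nonneg _, fun i => ?_, fun j => ?_⟩
  · simpa [mul_apply, sq] using congrFun₂ ((mem_orthogonalGroup_iff ι ℝ).mp hW) i i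
  · simpa [mul_apply, sq] using congrFun₂ ((mem_orthogonalGroup_iff' ι ℝ).mp hW) j j

section Secular

variable {ι : Type*} [Fintype ι] {ζ x : ι → ℝ} {l : ℝ}

theorem sum_inv_sub_mul_inv_sub_eq_zero (hne : ∀ i k, ζ i ≠ x k)
    (hsec : ∀ i, l * ∑ k, (ζ i - x k)⁻¹ = 1) {i i' : ι} (h : ζ i ≠ ζ i') :
    ∑ k, (ζ i - x k)⁻¹ * (ζ i' - x k)⁻¹ = 0 := by
  have hpf : ∀ k, (ζ i - x k)⁻¹ * (ζ i' - x k)⁻¹ =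
      (ζ i' - ζ i)⁻¹ * ((ζ i - x k)⁻¹ - (ζ i' - x k)⁻¹) := fun k => by
    have := sub_ne_zero.mpr (hne i k)
    have := sub_ne_zero.mpr (hne i' k)
    have := sub_ne_zero.mpr h.symm
    field_simp
    ring
  have hsum : ∀ i, ∑ k, (ζ i - x k)⁻¹ = l⁻¹ := fun i => eq_inv_of_mul_eq_one_right (hsec i)
  rw [sum_congr rfl fun k _ => hpf k, ← mul_sum, sum_sub_distrib, hsum, hsum, sub_self, mul_zero]

/-- Rows are the normalized eigenvectors `(1/(ζᵢ - xₖ))ₖ` of `diagonal x + λ𝟙𝟙ᵀ`. -/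
noncomputable def secularMatrix (ζ x : ι → ℝ) : Matrix ι ι ℝ :=
  of fun i k => (ζ i - x k)⁻¹ / √(∑ m, (ζ i - x m)⁻¹ ^ 2)

theorem sum_inv_sub_sq_pos (hne : ∀ i k, ζ i ≠ x k) (i : ι) :
    0 < ∑ m, (ζ i - x m)⁻¹ ^ 2 :=
  sum_pos (fun m _ => by have := inv_ne_zero (sub_ne_zero.mpr (hne i m)); positivity)
    ⟨i, mem_univ i⟩

variable [DecidableEq ι]

theorem secularMatrix_mem_orthogonalGroup (hζ : Function.Injective ζ) (hne : ∀ i k, ζ i ≠ x k)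
    (hsec : ∀ i, l * ∑ k, (ζ i - x k)⁻¹ = 1) : secularMatrix ζ x ∈ orthogonalGroup ι ℝ := by
  rw [mem_orthogonalGroup_iff]
  ext i i'
  simp only [secularMatrix, mul_apply, transpose_apply, of_apply, one_apply, div_mul_div_comm,
    ← sum_div]
  split_ifs with h
  · subst h
    rw [Real.mul_self_sqrt (sum_inv_sub_sq_pos hne i).le]
    simp only [← sq]
    exact div_self (sum_inv_sub_sq_pos hne i).ne'
  · rw [sum_inv_sub_mul_inv_sub_eq_zero hne hsec (hζ.ne h), zero_div]

theorem diagonal_mul_secularMatrix (hne : ∀ i k, ζ i ≠ x k)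
    (hsec : ∀ i, l * ∑ k, (ζ i - x k)⁻¹ = 1) :
    diagonal ζ * secularMatrix ζ x = secularMatrix ζ x * (diagonal x + of fun _ _ => l) := by
  ext i k
  have hik := sub_ne_zero.mpr (hne i k)
  rw [Matrix.mul_add, Matrix.add_apply, diagonal_mul, mul_diagonal, mul_apply]
  simp only [secularMatrix, of_apply]
  rw [← sum_mul, ← sum_div]
  set r := √(∑ m, (ζ i - x m)⁻¹ ^ 2)
  calc ζ i * ((ζ i - x k)⁻¹ / r) = (x k * (ζ i - x k)⁻¹ + (ζ i - x k) * (ζ i - x k)⁻¹) / r := by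
        ring
    _ = (x k * (ζ i - x k)⁻¹ + l * ∑ m, (ζ i - x m)⁻¹) / r := by
        rw [mul_inv_cancel₀ hik, hsec i]
    _ = (ζ i - x k)⁻¹ / r * x k + (∑ m, (ζ i - x m)⁻¹) / r * l := by ring

theorem transpose_mul_diagonal_mul_secularMatrix (hζ : Function.Injective ζ)
    (hne : ∀ i k, ζ i ≠ x k) (hsec : ∀ i, l * ∑ k, (ζ i - x k)⁻¹ = 1) :
    (secularMatrix ζ x)ᵀ * diagonal ζ * secularMatrix ζ x = diagonal x + of fun _ _ => l := by
  rw [mul_assoc, diagonal_mul_secularMatrix hne hsec, ← mul_assoc,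
    (mem_orthogonalGroup_iff' ι ℝ).mp (secularMatrix_mem_orthogonalGroup hζ hne hsec), one_mul]

theorem vecMul_map_sq_secularMatrix (hζ : Function.Injective ζ) (hne : ∀ i k, ζ i ≠ x k)
    (hsec : ∀ i, l * ∑ k, (ζ i - x k)⁻¹ = 1) :
    ζ ᵥ* (secularMatrix ζ x).map (· ^ 2) = fun k => x k + l := by
  ext k
  have := congrFun₂ (transpose_mul_diagonal_mul_secularMatrix hζ hne hsec) k k
  rw [mul_apply, Matrix.add_apply, diagonal_apply_eq, of_apply] at this
  simp only [mul_diagonal, transpose_apply] at this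
  rw [← this]
  simp only [vecMul, dotProduct, map_apply]
  exact sum_congr rfl fun i _ => by ring

theorem exists_mem_doublyStochastic_vecMul_eq_add (hx : Function.Injective x)
    (hζ : Function.Injective ζ) (hl : l ≠ 0)
    (hroot : ∀ i, (Lagrange.nodal univ x - C l * derivative (Lagrange.nodal univ x)).IsRoot (ζ i)) :
    ∃ D ∈ doublyStochastic ℝ ι, ζ ᵥ* D = fun k => x k + l := by
  have hne (i k : ι) : ζ i ≠ x k :=
    Lagrange.ne_of_isRoot_sub_C_mul_derivative hx.injOn hl (hroot i) k (mem_univ k)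
  have hsec (i : ι) : l * ∑ k, (ζ i - x k)⁻¹ = 1 :=
    Lagrange.mul_sum_inv_sub_eq_one_of_isRoot hx.injOn hl (hroot i)
  exact ⟨_, map_sq_mem_doublyStochastic (secularMatrix_mem_orthogonalGroup hζ hne hsec),
    vecMul_map_sq_secularMatrix hζ hne hsec⟩

end Secular

section Majorization

variable {ι : Type*} [Fintype ι]

/-- The bathtub principle. -/
theorem sum_le_sum_mul_of_le_of_le (S : Finset ι) {z t : ι → ℝ} {c : ℝ}
    (hS : ∀ i ∈ S, z i ≤ c) (hSc : ∀ i ∉ S, c ≤ z i) (ht₀ : ∀ i, 0 ≤ t i) (ht₁ : ∀ i, t i ≤ 1)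
    (ht : ∑ i, t i = #S) : ∑ i ∈ S, z i ≤ ∑ i, t i * z i := by
  classical
  calc ∑ i ∈ S, z i ≤ ∑ i ∈ S, (t i * z i + (1 - t i) * c) :=
        sum_le_sum fun i hi => by nlinarith [hS i hi, ht₁ i]
    _ = ∑ i ∈ S, t i * z i + (#S - ∑ i ∈ S, t i) * c := by
        rw [sum_add_distrib, ← sum_mul, sum_sub_distrib, sum_const, nsmul_one]
    _ = ∑ i ∈ S, t i * z i + ∑ i ∈ Sᶜ, t i * c := by
        rw [← sum_mul, ← ht, ← sum_add_sum_compl S t, add_sub_cancel_left]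
    _ ≤ ∑ i ∈ S, t i * z i + ∑ i ∈ Sᶜ, t i * z i := by
        gcongr with i hi
        exacts [ht₀ i, hSc i (mem_compl.mp hi)]
    _ = ∑ i, t i * z i := sum_add_sum_compl S _

variable [DecidableEq ι] {D : Matrix ι ι ℝ}

theorem sum_vecMul_of_mem_doublyStochastic (hD : D ∈ doublyStochastic ℝ ι) (z : ι → ℝ) :
    ∑ k, (z ᵥ* D) k = ∑ i, z i := by
  simp only [vecMul, dotProduct]
  rw [sum_comm]
  simp only [← mul_sum, sum_row_of_mem_doublyStochastic hD, mul_one]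

theorem sum_le_sum_vecMul_of_mem_doublyStochastic (hD : D ∈ doublyStochastic ℝ ι)
    (S T : Finset ι) (hST : #T = #S) {z : ι → ℝ} {c : ℝ} (hS : ∀ i ∈ S, z i ≤ c)
    (hSc : ∀ i ∉ S, c ≤ z i) : ∑ i ∈ S, z i ≤ ∑ k ∈ T, (z ᵥ* D) k := by
  have hT : ∑ k ∈ T, (z ᵥ* D) k = ∑ i, (∑ k ∈ T, D i k) * z i := by
    simp only [vecMul, dotProduct]
    rw [sum_comm]
    simp only [sum_mul, mul_comm (z _)]
  rw [hT]
  refine sum_le_sum_mul_of_le_of_le S hS hSc (fun i => sum_nonneg fun k _ =>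
    nonneg_of_mem_doublyStochastic hD) (fun i => ?_) ?_
  · calc ∑ k ∈ T, D i k ≤ ∑ k, D i k :=
          sum_le_sum_of_subset_of_nonneg (subset_univ T) fun k _ _ =>
            nonneg_of_mem_doublyStochastic hD
      _ = 1 := sum_row_of_mem_doublyStochastic hD i
  · calc ∑ i, ∑ k ∈ T, D i k = ∑ k ∈ T, ∑ i, D i k := sum_comm
      _ = #S := by simp [sum_col_of_mem_doublyStochastic hD, hST]

theorem sum_Iio_le_sum_Iio_vecMul_of_mem_doublyStochastic {n : ℕ}
    {D : Matrix (Fin n) (Fin n) ℝ} (hD : D ∈ doublyStochastic ℝ (Fin n)) {z : Fin n → ℝ}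
    (hz : Monotone z) (j : Fin n) : ∑ i ∈ Iio j, z i ≤ ∑ i ∈ Iio j, (z ᵥ* D) i :=
  sum_le_sum_vecMul_of_mem_doublyStochastic hD _ _ rfl (c := z j)
    (fun _ hi => hz (mem_Iio.mp hi).le) (fun _ hi => hz (not_lt.mp (mem_Iio.not.mp hi)))

end Majorization

theorem Fin.sum_Iio_eq_sum_range {M : Type*} [AddCommMonoid M] {n : ℕ} (f : ℕ → M)
    (j : Fin n) : ∑ i ∈ Iio j, f i = ∑ i ∈ range j, f i := by
  rw [← Nat.Iio_eq_range, ← Fin.map_valEmbedding_Iio, sum_map]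
  rfl

theorem shifted_roots_majorize_general (n : ℕ) (x : ℕ → ℝ)
    (hx : ∀ i j, i < j → j < n → x i < x j)
    (P : Polynomial ℝ)
    (hP : P = ∏ i ∈ Finset.range n, (X - C (x i)))
    (ζ : ℝ → ℕ → ℝ)
    (hroot : ∀ l : ℝ, ∀ i < n, (P - C l * Polynomial.derivative P).IsRoot (ζ l i))
    (hmono : ∀ l : ℝ, ∀ i j, i < j → j < n → ζ l i < ζ l j)
    (hzero : ∀ i < n, ζ 0 i = x i) :
    ∀ l : ℝ,
      (∀ j < n, ∑ i ∈ Finset.range j, (ζ l i - l) ≤ ∑ i ∈ Finset.range j, x i) ∧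
      ∑ i ∈ Finset.range n, (ζ l i - l) = ∑ i ∈ Finset.range n, x i := by
  intro l
  have hx' : StrictMono fun k : Fin n => x k := fun a b hab => hx a b hab b.isLt
  have hζ : StrictMono fun i : Fin n => ζ l i := fun a b hab => hmono l a b hab b.isLt
  obtain ⟨D, hD, hζD⟩ : ∃ D ∈ doublyStochastic ℝ (Fin n),
      (fun i : Fin n => ζ l i) ᵥ* D = fun k : Fin n => x k + l := by
    rcases eq_or_ne l 0 with rfl | hl
    · exact ⟨1, one_mem _, by ext k; simp [hzero k k.isLt]⟩
    refine exists_mem_doublyStochastic_vecMul_eq_add hx'.injective hζ.injective hl fun i => ?_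
    rw [Lagrange.nodal_eq, ← prod_range fun k => X - C (x k), ← hP]
    exact hroot l i i.isLt
  refine ⟨fun j hj => ?_, ?_⟩
  · have h := sum_Iio_le_sum_Iio_vecMul_of_mem_doublyStochastic hD hζ.monotone ⟨j, hj⟩
    rw [hζD, Fin.sum_Iio_eq_sum_range (ζ l), Fin.sum_Iio_eq_sum_range fun k => x k + l] at h
    simp only [sum_sub_distrib, sum_add_distrib, sum_const, card_range] at h ⊢
    linarith
  · have h := sum_vecMul_of_mem_doublyStochastic hD fun i : Fin n => ζ l i
    rw [hζD, ← sum_range fun k => x k + l, ← sum_range (ζ l)] at h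
    simp only [sum_sub_distrib, sum_add_distrib, sum_const, card_range] at h ⊢
    linarith

theorem shifted_roots_majorize (n : ℕ) (hn : 2 ≤ n) (x : ℕ → ℝ)
    (hx : ∀ i j, i < j → j < n → x i < x j)
    (P : Polynomial ℝ)
    (hP : P = ∏ i ∈ Finset.range n, (X - C (x i)))
    (ζ : ℝ → ℕ → ℝ)
    (hroot : ∀ l : ℝ, ∀ i < n, (P - C l * Polynomial.derivative P).IsRoot (ζ l i))
    (hmono : ∀ l : ℝ, ∀ i j, i < j → j < n → ζ l i < ζ l j)
    (hzero : ∀ i < n, ζ 0 i = x i) :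
    ∀ l : ℝ,
      (∀ j < n, ∑ i ∈ Finset.range j, (ζ l i - l) ≤ ∑ i ∈ Finset.range j, x i) ∧
      ∑ i ∈ Finset.range n, (ζ l i - l) = ∑ i ∈ Finset.range n, x i :=
  shifted_roots_majorize_general n x hx P hP ζ hroot hmono hzero
end

section
/- Let n ≥ 2, x_1 < … < x_n real, P(x) = Π(x − x_i), and for λ ∈ ℝ let ζ_i(λ; x), i = 1,…,n, be the (simple, real) zeros of P − λP′ labeled so that ζ_i(0; x) = x_i. Then for λ ≠ 0 and all 1 ≤ i, j ≤ n: (ζ_i(λ;x) − x_j)² · ∂ζ_i/∂x_j = λ² · ∂ζ_i/∂λ > 0. In particular, for fixed λ ≠ 0 and fixed x_1 < … < x_{n−1}, each ζ_i(λ; x) is a strictly increasing function of x_n on (x_{n−1}, ∞). -/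
open Polynomial Filter Topology Lagrange Finset

/-! Each zero `ζ_i` is the `i`-th ordered root of a polynomial that is affine in the parameter
being varied: `P - λP' = P + λ(-P')`, and with `P = (X - x_j) R`,
`P - λP' = (XR - λ(R + XR')) + x_j (λR' - R)`. Along an affine family `A + tB` with simple
ordered roots, the ordered roots are continuous, because `(A + tB)(z_k) = ∏_m (z_k - ψ_m(t))`
tends to `0` and the ordering pins down the labels, and they then have the implicit-function
derivative `-B(ζ_i) / Q'(ζ_i)` with `Q = ∏ (X - ζ_k)`. Hence `∂ζ_i/∂λ = P'(ζ_i) / Q'(ζ_i)` and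
`∂ζ_i/∂x_j = (R - λR')(ζ_i) / Q'(ζ_i)`, and the identity is `P(ζ_i) = λP'(ζ_i)` rearranged.
For the sign, `P'(ζ_i) Q'(ζ_i)` is continuous in `λ`, never zero, and equal to `P'(x_i)² > 0`
at `λ = 0`. -/

theorem Polynomial.degree_C_mul_derivative_lt_s12 {R : Type*} [Semiring R] {p : R[X]} (hp : p ≠ 0)
    (t : R) : (C t * derivative p).degree < p.degree := by
  rw [← smul_eq_C_mul]
  exact (degree_smul_le _ _).trans_lt (degree_derivative_lt hp)

theorem Polynomial.Monic.eq_nodal_of_isRoot {R ι : Type*} [CommRing R] [IsDomain R]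
    {s : Finset ι} {v : ι → R} {p : R[X]} (hp : p.Monic) (hdeg : p.degree = #s)
    (hv : Set.InjOn v s) (hroot : ∀ i ∈ s, p.IsRoot (v i)) : p = nodal s v :=
  eq_of_degree_le_of_eval_index_eq s hv hdeg.le (by rw [hdeg, degree_nodal])
    (by rw [hp.leadingCoeff, nodal_monic.leadingCoeff])
    fun i hi => by rw [(hroot i hi).eq_zero, eval_nodal_at_node hi]

theorem Polynomial.Monic.sub_C_mul_derivative_eq_nodal {R ι : Type*} [CommRing R] [IsDomain R]
    {s : Finset ι} {v : ι → R} {p : R[X]} (hp : p.Monic) (hdeg : p.degree = #s) (t : R)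
    (hv : Set.InjOn v s) (hroot : ∀ i ∈ s, (p - C t * derivative p).IsRoot (v i)) :
    p - C t * derivative p = nodal s v := by
  have hlt := degree_C_mul_derivative_lt_s12 hp.ne_zero t
  exact (hp.sub_of_left hlt).eq_nodal_of_isRoot
    (by rw [degree_sub_eq_left_of_degree_lt hlt, hdeg]) hv hroot

theorem Lagrange.eval_derivative_nodal_ne_zero {F ι : Type*} [Field F] [DecidableEq ι]
    {s : Finset ι} {v : ι → F} {i : ι} (hv : Set.InjOn v s) (hi : i ∈ s) :
    (derivative (nodal s v)).eval (v i) ≠ 0 := fun h =>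
  nodalWeight_ne_zero hv hi (by rw [nodalWeight_eq_eval_derivative_nodal hi, h, inv_zero])

theorem Lagrange.nodal_update {R ι : Type*} [CommRing R] [DecidableEq ι] {s : Finset ι}
    (v : ι → R) {j : ι} (hj : j ∈ s) (a : R) :
    nodal s (Function.update v j a) = (X - C a) * nodal (s.erase j) v := by
  rw [nodal_eq_mul_nodal_erase hj, Function.update_self]
  congr 1
  exact prod_congr rfl fun k hk => by rw [Function.update_of_ne (ne_of_mem_erase hk)]

theorem sq_mul_eval_sub_eq_sq_mul_eval_derivative {R : Type*} [CommRing R] {p q : R[X]}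
    {a e l : R} (hp : p = (X - C a) * q) (he : p.eval e = l * (derivative p).eval e) :
    (e - a) ^ 2 * (q.eval e - l * (derivative q).eval e) = l ^ 2 * (derivative p).eval e := by
  subst hp
  simp only [derivative_mul, derivative_sub, derivative_X, derivative_C, eval_add, eval_mul,
    eval_sub, eval_X, eval_C, eval_one, eval_zero] at he ⊢
  linear_combination (e - a + l) * he

theorem isOpen_setOf_strictMono {ι α : Type*} [Preorder ι] [Finite ι] [LinearOrder α]
    [TopologicalSpace α] [OrderClosedTopology α] : IsOpen {y : ι → α | StrictMono y} := by
  simp only [StrictMono, Set.ofPred_forall]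
  exact isOpen_iInter_of_finite fun a => isOpen_iInter_of_finite fun b =>
    isOpen_iInter_of_finite fun _ => isOpen_lt (continuous_apply a) (continuous_apply b)

section AffineFamily

variable {n : ℕ} {A B : ℝ[X]} {ψ : ℝ → Fin n → ℝ} {t₀ : ℝ}

theorem eventually_exists_root_near
    (h : ∀ᶠ t in 𝓝 t₀, A + C t * B = nodal univ (ψ t)) (k : Fin n) {ε : ℝ} (hε : 0 < ε) :
    ∀ᶠ t in 𝓝 t₀, ∃ m, |ψ t m - ψ t₀ k| < ε := by
  set y := ψ t₀ k
  have hcont : Tendsto (fun t => (A + C t * B).eval y) (𝓝 t₀) (𝓝 0) := by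
    have : Continuous fun t => (A + C t * B).eval y := by
      simp only [eval_add, eval_mul, eval_C]; fun_prop
    simpa [h.self_of_nhds, y, eval_nodal_at_node] using this.tendsto t₀
  filter_upwards [h, hcont.abs.eventually_lt_const (by simpa using pow_pos hε n)]
    with t ht hsmall
  by_contra! hfar
  have : ε ^ n ≤ |(A + C t * B).eval y| := by
    rw [ht, eval_nodal, abs_prod]
    calc ε ^ n = ∏ _m : Fin n, ε := by simp
      _ ≤ ∏ m, |y - ψ t m| :=
        prod_le_prod (fun _ _ => hε.le) fun m _ => by rw [abs_sub_comm]; exact hfar m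
  linarith

theorem tendsto_ordered_root
    (h : ∀ᶠ t in 𝓝 t₀, A + C t * B = nodal univ (ψ t) ∧ StrictMono (ψ t)) (k : Fin n) :
    Tendsto (fun t => ψ t k) (𝓝 t₀) (𝓝 (ψ t₀ k)) := by
  set z := ψ t₀
  have hsep : ∀ᶠ ε in 𝓝 (0 : ℝ), ∀ a b : Fin n, a < b → 2 * ε < z b - z a := by
    refine eventually_all.2 fun a => eventually_all.2 fun b => ?_
    by_cases hab : a < b
    · have : Tendsto (fun ε : ℝ => 2 * ε) (𝓝 0) (𝓝 0) := by
        simpa using ((continuous_const_mul (2 : ℝ)).tendsto 0)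
      filter_upwards [this.eventually_lt_const (sub_pos.2 (h.self_of_nhds.2 hab))]
        with ε hε _ using hε
    · exact Eventually.of_forall fun _ h => (hab h).elim
  rw [Metric.tendsto_nhds]
  intro ε hε
  obtain ⟨δ, hδsep, hδ⟩ :=
    ((hsep.filter_mono nhdsWithin_le_nhds).and (Ioo_mem_nhdsGT hε)).exists
  filter_upwards [h, eventually_all.2 fun k =>
    eventually_exists_root_near (h.mono fun _ => And.left) k hδ.1] with t ht hnear
  -- the `δ`-intervals around the `z k` are disjoint, so the order of the roots forces `σ = id`
  choose σ hσ using hnear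
  have hσmono : StrictMono σ := fun a b hab => by
    have := hδsep a b hab
    have := abs_lt.1 (hσ a)
    have := abs_lt.1 (hσ b)
    exact ht.2.lt_iff_lt.1 (by linarith)
  rw [hσmono.eq_id] at hσ
  exact (hσ k).trans hδ.2

theorem hasDerivAt_ordered_root
    (h : ∀ᶠ t in 𝓝 t₀, A + C t * B = nodal univ (ψ t) ∧ StrictMono (ψ t)) (i : Fin n) :
    HasDerivAt (fun t => ψ t i)
      (-B.eval (ψ t₀ i) / (derivative (nodal univ (ψ t₀))).eval (ψ t₀ i)) t₀ := by
  set z := ψ t₀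
  set H := nodal (univ.erase i) z
  have hH : H.eval (z i) ≠ 0 := by
    rw [← eval_nodal_derivative_eval_node_eq (mem_univ i)]
    exact eval_derivative_nodal_ne_zero h.self_of_nhds.2.injective.injOn (mem_univ i)
  rw [eval_nodal_derivative_eval_node_eq (mem_univ i), hasDerivAt_iff_tendsto_slope]
  have hψ := tendsto_ordered_root h i
  have hHψ : Tendsto (fun t => H.eval (ψ t i)) (𝓝 t₀) (𝓝 (H.eval (z i))) :=
    (H.continuous.tendsto _).comp hψ
  refine Tendsto.congr' ?_
    ((((B.continuous.tendsto _).comp hψ).neg.div hHψ hH).mono_left nhdsWithin_le_nhds)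
  filter_upwards [(h.and (hHψ.eventually_ne hH)).filter_mono nhdsWithin_le_nhds,
    self_mem_nhdsWithin] with t ⟨⟨ht, _⟩, hHt⟩ htne
  have hkey : (ψ t i - z i) * H.eval (ψ t i) + (t - t₀) * B.eval (ψ t i) = 0 := by
    have h1 := congrArg (eval (ψ t i)) ht
    have h0 := congrArg (eval (ψ t i)) h.self_of_nhds.1
    rw [eval_nodal_at_node (mem_univ i)] at h1
    rw [nodal_eq_mul_nodal_erase (mem_univ i)] at h0
    simp only [eval_add, eval_mul, eval_C, eval_sub, eval_X] at h0 h1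
    linear_combination h1 - h0
  rw [slope_def_field, Pi.div_apply, Function.comp_apply,
    div_eq_div_iff hHt (sub_ne_zero.2 htne)]
  linear_combination -hkey

theorem hasDerivAt_ordered_root_lambda {P : ℝ[X]}
    (hfac : ∀ t, P - C t * derivative P = nodal univ (ψ t)) (hmono : ∀ t, StrictMono (ψ t))
    (t : ℝ) (i : Fin n) :
    HasDerivAt (fun t => ψ t i)
      ((derivative P).eval (ψ t i) / (derivative (nodal univ (ψ t))).eval (ψ t i)) t := by
  simpa using hasDerivAt_ordered_root (A := P) (B := -derivative P)
    (.of_forall fun t => ⟨by rw [← hfac]; ring, hmono t⟩) i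

theorem ordered_root_lambda_deriv_pos {x : Fin n → ℝ} (hx : Function.Injective x)
    (hfac : ∀ t, nodal univ x - C t * derivative (nodal univ x) = nodal univ (ψ t))
    (hmono : ∀ t, StrictMono (ψ t)) (hψ : ψ 0 = x) (t : ℝ) (i : Fin n) :
    0 < (derivative (nodal univ x)).eval (ψ t i) /
      (derivative (nodal univ (ψ t))).eval (ψ t i) := by
  set P := nodal univ x
  set φ : ℝ → ℝ := fun t =>
    (derivative P).eval (ψ t i) * (derivative (nodal univ (ψ t))).eval (ψ t i)
  have hφ : φ = fun t => (derivative P).eval (ψ t i) *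
      ((derivative P).eval (ψ t i) - t * (derivative (derivative P)).eval (ψ t i)) := by
    ext t
    simp [φ, ← hfac t]
  have hcont : Continuous φ := by
    have : Continuous fun t => ψ t i := continuous_iff_continuousAt.2 fun t =>
      (hasDerivAt_ordered_root_lambda hfac hmono t i).continuousAt
    rw [hφ]
    fun_prop
  -- a common zero of `P'` and `P - tP'` would be a multiple root of `P`
  have hne : ∀ t, φ t ≠ 0 := by
    intro t
    refine mul_ne_zero (fun h => ?_)
      (eval_derivative_nodal_ne_zero (hmono t).injective.injOn (mem_univ i))
    have hroot : P.eval (ψ t i) = 0 := by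
      have := congrArg (eval (ψ t i)) (hfac t)
      simpa [eval_nodal_at_node, h] using this
    obtain ⟨m, -, hm⟩ := prod_eq_zero_iff.1 (eval_nodal.symm.trans hroot)
    rw [sub_eq_zero.1 hm] at h
    exact eval_derivative_nodal_ne_zero hx.injOn (mem_univ m) h
  have h0 : 0 < φ 0 :=
    lt_of_le_of_ne (by simp only [φ, hψ]; exact mul_self_nonneg _) (hne 0).symm
  have ht : 0 < φ t := by
    by_contra! ht
    obtain ⟨s, hs⟩ := intermediate_value_univ t 0 hcont ⟨ht, h0.le⟩
    exact hne s hs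
  exact div_pos_iff.2 (mul_pos_iff.1 ht)

end AffineFamily

theorem hasDerivAt_ordered_root_node {n : ℕ} {l : ℝ} {ζ : (Fin n → ℝ) → Fin n → ℝ}
    {x : Fin n → ℝ}
    (hfac : ∀ y, StrictMono y → nodal univ y - C l * derivative (nodal univ y) = nodal univ (ζ y))
    (hmono : ∀ y, StrictMono y → StrictMono (ζ y)) (hx : StrictMono x) (i j : Fin n) :
    HasDerivAt (fun s => ζ (Function.update x j s) i)
      (((nodal (univ.erase j) x).eval (ζ x i) -
        l * (derivative (nodal (univ.erase j) x)).eval (ζ x i)) /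
        (derivative (nodal univ (ζ x))).eval (ζ x i)) (x j) := by
  set R := nodal (univ.erase j) x
  have hupd : ∀ᶠ s in 𝓝 (x j), StrictMono (Function.update x j s) :=
    (isOpen_setOf_strictMono.preimage (continuous_const.update j continuous_id)).mem_nhds
      (by simpa using hx)
  have h := hasDerivAt_ordered_root (A := X * R - C l * (R + X * derivative R))
    (B := C l * derivative R - R) (ψ := fun s => ζ (Function.update x j s))
    (hupd.mono fun s hs => ⟨by
      rw [← hfac _ hs, nodal_update x (mem_univ j)]
      simp only [derivative_mul, derivative_sub, derivative_X, derivative_C]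
      ring, hmono _ hs⟩) i
  simp only [Function.update_eq_self] at h
  convert h using 1
  simp only [eval_sub, eval_mul, eval_C]
  ring

theorem root_partial_derivative_identity_general (n : ℕ)
    (ζ : ℝ → (Fin n → ℝ) → Fin n → ℝ)
    (hroot : ∀ (l : ℝ) (x : Fin n → ℝ), StrictMono x → ∀ i : Fin n,
      ((∏ k, (X - C (x k))) -
        C l * Polynomial.derivative (∏ k, (X - C (x k)))).IsRoot (ζ l x i))
    (hmono : ∀ (l : ℝ) (x : Fin n → ℝ), StrictMono x → StrictMono (ζ l x))
    (hzero : ∀ x : Fin n → ℝ, StrictMono x → ζ 0 x = x)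
    (l : ℝ) (hl : l ≠ 0) (x : Fin n → ℝ) (hx : StrictMono x) (i j : Fin n) :
    ∃ dl dx : ℝ,
      HasDerivAt (fun t : ℝ => ζ t x i) dl l ∧
      HasDerivAt (fun s : ℝ => ζ l (Function.update x j s) i) dx (x j) ∧
      (ζ l x i - x j) ^ 2 * dx = l ^ 2 * dl ∧ 0 < l ^ 2 * dl := by
  have hfac : ∀ t y, StrictMono y →
      nodal univ y - C t * derivative (nodal univ y) = nodal univ (ζ t y) := fun t y hy =>
    nodal_monic.sub_C_mul_derivative_eq_nodal degree_nodal t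
      (hmono t y hy).injective.injOn fun k _ => hroot t y hy k
  refine ⟨_, _, hasDerivAt_ordered_root_lambda (hfac · x hx) (hmono · x hx) l i,
    hasDerivAt_ordered_root_node (hfac l) (hmono l) hx i j, ?_, mul_pos (by positivity)
      (ordered_root_lambda_deriv_pos hx.injective (hfac · x hx) (hmono · x hx)
        (hzero x hx) l i)⟩
  rw [mul_div_assoc', mul_div_assoc']
  congr 1
  refine sq_mul_eval_sub_eq_sq_mul_eval_derivative (nodal_eq_mul_nodal_erase (mem_univ j)) ?_
  have h : (nodal univ x - C l * derivative (nodal univ x)).IsRoot (ζ l x i) := hroot l x hx i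
  rwa [IsRoot.def, eval_sub, eval_mul, eval_C, sub_eq_zero] at h

theorem root_partial_derivative_identity (n : ℕ) (hn : 2 ≤ n)
    (ζ : ℝ → (Fin n → ℝ) → Fin n → ℝ)
    (hroot : ∀ (l : ℝ) (x : Fin n → ℝ), StrictMono x → ∀ i : Fin n,
      ((∏ k, (X - C (x k))) -
        C l * Polynomial.derivative (∏ k, (X - C (x k)))).IsRoot (ζ l x i))
    (hmono : ∀ (l : ℝ) (x : Fin n → ℝ), StrictMono x → StrictMono (ζ l x))
    (hzero : ∀ x : Fin n → ℝ, StrictMono x → ζ 0 x = x)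
    (l : ℝ) (hl : l ≠ 0) (x : Fin n → ℝ) (hx : StrictMono x) (i j : Fin n) :
    ∃ dl dx : ℝ,
      HasDerivAt (fun t : ℝ => ζ t x i) dl l ∧
      HasDerivAt (fun s : ℝ => ζ l (Function.update x j s) i) dx (x j) ∧
      (ζ l x i - x j) ^ 2 * dx = l ^ 2 * dl ∧ 0 < l ^ 2 * dl :=
  root_partial_derivative_identity_general n ζ hroot hmono hzero l hl x hx i j
end

section
/- Let P be a monic hyperbolic polynomial of degree n ≥ 1 and suppose Q is a polynomial with deg Q ≤ n−1 and leading coefficient n such that for some ε > 0 the roots of P(x) are majorized by the roots of P(x+μ) − μQ(x+μ) for all μ ∈ (−ε, ε) (and these polynomials are hyperbolic). Then Q = P′. -/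
/-!
Let `t` run over the roots of `P - μ Q`. Tested against the convex functions `(x - a) ^ (2 m)`,
the majorization says that `μ ↦ ∑ (t - μ - a) ^ (2 m)` has a local minimum at `μ = 0`. Writing
`∑ g (t)` as the residue at infinity of `g S' / S` for `S = P - μ Q` and dividing in `ℝ[μ][X]`,
that sum is a polynomial in `μ`, and its derivative at `0` is a linear functional `T` of
`g = (X - a) ^ (2 m)`. These polynomials span `ℝ[X]`, so `T = 0`. Evaluating `T` on the
multiples of `P / gcd (P, P')` and using that the residue pairing modulo `P` is non-degenerate
gives `P * gcd (P, P') ∣ W (Q - P', P)` for the Wronskian `W`. At a root of multiplicity `m` of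
`P`, a root of smaller multiplicity `d` of `Q - P'` would make `W` vanish to order exactly
`m + d - 1 < 2 m - 1`; hence `P ∣ Q - P'`, and `Q = P'` by degrees.
-/

open Polynomial

/-- The root multiset of `P` is majorized by that of `Q`
(Hardy–Littlewood–Pólya / Schur formulation via convex functions). -/
def polyMaj (P Q : Polynomial ℝ) : Prop :=
  ∀ f : ℝ → ℝ, ConvexOn ℝ Set.univ f → (P.roots.map f).sum ≤ (Q.roots.map f).sum

namespace Polynomial

section CommRing

variable {R : Type*} [CommRing R]

/-- Linear also for non-monic `q`, where `p /ₘ q = 0`. -/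
noncomputable def divByMonicHom (q : R[X]) : R[X] →ₗ[R] R[X] where
  toFun p := p /ₘ q
  map_add' p₁ p₂ := by
    nontriviality R
    by_cases hq : q.Monic
    · refine (div_modByMonic_unique _ (p₁ %ₘ q + p₂ %ₘ q) hq ⟨?_, ?_⟩).1
      · linear_combination modByMonic_add_div p₁ q + modByMonic_add_div p₂ q
      · exact (degree_add_le _ _).trans_lt
          (max_lt (degree_modByMonic_lt _ hq) (degree_modByMonic_lt _ hq))
    · simp [divByMonic_eq_of_not_monic _ hq]
  map_smul' c p := by
    nontriviality R
    by_cases hq : q.Monic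
    · refine (div_modByMonic_unique _ (c • (p %ₘ q)) hq ⟨?_, ?_⟩).1
      · rw [RingHom.id_apply, mul_smul_comm, ← smul_add, modByMonic_add_div]
      · exact (degree_smul_le _ _).trans_lt (degree_modByMonic_lt _ hq)
    · simp [divByMonic_eq_of_not_monic _ hq]

/-- For monic `P`, `residue P g` is the coefficient of `X⁻¹` in the expansion of `g / P`
at infinity. -/
noncomputable def residue (P : R[X]) : R[X] →ₗ[R] R :=
  lcoeff R (P.natDegree - 1) ∘ₗ modByMonicHom P

theorem residue_apply (P g : R[X]) : residue P g = (g %ₘ P).coeff (P.natDegree - 1) := rfl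

variable {P Q : R[X]}

theorem residue_eq_zero_of_dvd (hP : P.Monic) {g : R[X]} (h : P ∣ g) : residue P g = 0 := by
  rw [residue_apply, (modByMonic_eq_zero_iff_dvd hP).2 h, coeff_zero]

theorem residue_mul_modByMonic (hP : P.Monic) (k w : R[X]) :
    residue P (k * (w %ₘ P)) = residue P (k * w) := by
  rw [← sub_eq_zero, ← map_sub, ← mul_sub]
  refine residue_eq_zero_of_dvd hP ⟨-(k * (w /ₘ P)), ?_⟩
  linear_combination k * modByMonic_add_div w P

theorem dvd_of_forall_residue_mul_eq_zero [Nontrivial R] (hP : P.Monic) {w : R[X]}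
    (h : ∀ k, residue P (k * w) = 0) : P ∣ w := by
  rw [← modByMonic_eq_zero_iff_dvd hP]
  by_contra hr
  set r := w %ₘ P
  have hrP : r.natDegree < P.natDegree :=
    natDegree_modByMonic_lt _ hP (by rintro rfl; simp [r, modByMonic_one] at hr)
  set j := P.natDegree - 1 - r.natDegree
  have hdeg : (X ^ j * r).degree < P.degree := by
    rw [degree_eq_natDegree hP.ne_zero]
    refine degree_le_natDegree.trans_lt ?_
    have := natDegree_mul_le (p := (X : R[X]) ^ j) (q := r)
    rw [natDegree_X_pow] at this
    exact_mod_cast (by omega : (X ^ j * r).natDegree < P.natDegree)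
  have hk := h (X ^ j)
  rw [← residue_mul_modByMonic hP, residue_apply, (modByMonic_eq_self_iff hP).2 hdeg,
    show P.natDegree - 1 = j + r.natDegree by omega, coeff_X_pow_mul'] at hk
  simp only [le_add_iff_nonneg_right, zero_le, ↓reduceIte, add_tsub_cancel_left] at hk
  exact hr (leadingCoeff_eq_zero.1 hk)

theorem residue_derivative (hP : P.Monic) (g : R[X]) :
    residue P (derivative g) = residue P (derivative P * (g /ₘ P)) := by
  have hg : derivative g = derivative P * (g /ₘ P) + P * derivative (g /ₘ P)
      + derivative (g %ₘ P) := by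
    conv_lhs => rw [← modByMonic_add_div g P]
    rw [derivative_add, derivative_mul]; ring
  rw [hg, map_add, map_add, residue_eq_zero_of_dvd hP (dvd_mul_right _ _), add_zero,
    add_eq_left, residue_apply]
  nontriviality R
  rcases Nat.eq_zero_or_pos P.natDegree with h0 | hpos
  · rw [hP.natDegree_eq_zero.1 h0, modByMonic_one, coeff_zero]
  have hdeg : (derivative (g %ₘ P)).degree < P.degree :=
    degree_derivative_le.trans_lt (degree_modByMonic_lt _ hP)
  rw [(modByMonic_eq_self_iff hP).2 hdeg, coeff_derivative, Nat.sub_add_cancel hpos,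
    coeff_eq_zero_of_natDegree_lt (natDegree_modByMonic_lt _ hP (by rintro rfl; simp at hpos)),
    zero_mul]

theorem residue_X_sub_C_mul [Nontrivial R] {T : R[X]} (hT : T.Monic) (a : R) (u : R[X]) :
    residue ((X - C a) * T) ((X - C a) * u) = residue T u := by
  have hdeg : ((X - C a) * (u %ₘ T)).degree < ((X - C a) * T).degree := by
    rw [hT.degree_mul]
    exact (degree_mul_le _ _).trans_lt
      (WithBot.add_lt_add_left (by simp) (degree_modByMonic_lt _ hT))
  have hmod : ((X - C a) * u) %ₘ ((X - C a) * T) = (X - C a) * (u %ₘ T) := by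
    refine (div_modByMonic_unique (u /ₘ T) _ ((monic_X_sub_C a).mul hT) ⟨?_, hdeg⟩).2
    linear_combination (X - C a) * modByMonic_add_div u T
  rw [residue_apply, residue_apply, hmod, (monic_X_sub_C a).natDegree_mul hT, natDegree_X_sub_C]
  rcases Nat.eq_zero_or_pos T.natDegree with h0 | hpos
  · rw [hT.natDegree_eq_zero.1 h0, modByMonic_one]; simp
  obtain ⟨d, hd⟩ : ∃ d, T.natDegree = d + 1 := ⟨_, (Nat.succ_pred_eq_of_pos hpos).symm⟩
  rw [hd, show 1 + (d + 1) - 1 = d + 1 by omega, Nat.add_sub_cancel, sub_mul, coeff_sub,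
    coeff_X_mul, coeff_C_mul, coeff_eq_zero_of_degree_lt (n := d + 1), mul_zero, sub_zero]
  exact (degree_modByMonic_lt _ hT).trans_eq (by rw [degree_eq_natDegree hT.ne_zero, hd])

theorem residue_X_sub_C_mul_self_mul [Nontrivial R] {T : R[X]} (hT : T.Monic) (a : R)
    (g : R[X]) : residue ((X - C a) * T) (g * T) = g.eval a := by
  obtain ⟨h, hh⟩ := X_sub_C_dvd_sub_C_eval (p := g) (a := a)
  have hdeg : (C (g.eval a) * T).degree < ((X - C a) * T).degree := by
    refine degree_lt_degree ((natDegree_C_mul_le _ _).trans_lt ?_)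
    rw [(monic_X_sub_C a).natDegree_mul hT, natDegree_X_sub_C]
    omega
  have hmod : (g * T) %ₘ ((X - C a) * T) = C (g.eval a) * T :=
    (div_modByMonic_unique h _ ((monic_X_sub_C a).mul hT)
      ⟨by linear_combination -T * hh, hdeg⟩).2
  rw [residue_apply, hmod, (monic_X_sub_C a).natDegree_mul hT, natDegree_X_sub_C, coeff_C_mul,
    add_tsub_cancel_left, ← leadingCoeff, hT.leadingCoeff, mul_one]

theorem residue_mul_derivative_prod_X_sub_C [Nontrivial R] (s : Multiset R) (g : R[X]) :
    residue (s.map (X - C ·)).prod (g * derivative (s.map (X - C ·)).prod) =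
      (s.map g.eval).sum := by
  induction s using Multiset.induction_on with
  | empty => simp [residue_apply]
  | cons a s ih =>
    have hT : (s.map (X - C ·)).prod.Monic :=
      monic_multiset_prod_of_monic _ _ fun a _ ↦ monic_X_sub_C a
    rw [Multiset.map_cons, Multiset.prod_cons, derivative_mul, derivative_X_sub_C, one_mul,
      mul_add, map_add, residue_X_sub_C_mul_self_mul hT, mul_left_comm,
      residue_X_sub_C_mul hT, ih, Multiset.map_cons, Multiset.sum_cons]

theorem degree_C_mul_le (a : R) (p : R[X]) : (C a * p).degree ≤ p.degree := by
  rw [← smul_eq_C_mul]; exact degree_smul_le a p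

theorem natDegree_sub_C_mul (hQ : Q.degree < P.degree) (μ : R) :
    (P - C μ * Q).natDegree = P.natDegree :=
  natDegree_eq_of_degree_eq (degree_sub_eq_left_of_degree_lt ((degree_C_mul_le _ _).trans_lt hQ))

theorem exists_comp_X_sub_C_eq (p : R[X]) (a : R) :
    ∃ k : R[X], p.comp (X - C a) = p - C a * derivative p + C a ^ 2 * k := by
  obtain ⟨k, hk⟩ := binomExpansion (p.map C) X (-C a)
  refine ⟨k, ?_⟩
  rw [sub_eq_add_neg, comp, ← eval_map, hk, derivative_map, eval_map, eval_map, eval₂_C_X,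
    eval₂_C_X]
  ring

theorem evalRingHom_comp_C (μ : R) : (evalRingHom μ).comp C = RingHom.id R :=
  RingHom.ext fun _ ↦ eval_C

/-- `P - μ Q` over `R[μ]`, the parameter `μ` being `C X`. -/
noncomputable def pencil (P Q : R[X]) : R[X][X] :=
  P.map C - C X * Q.map C

theorem degree_C_X_mul_map_C_lt (hQ : Q.degree < P.degree) :
    (C X * Q.map C).degree < (P.map C).degree := by
  rw [degree_map_eq_of_injective C_injective]
  exact (degree_C_mul_le _ _).trans_lt (degree_map_le.trans_lt hQ)

theorem monic_pencil (hP : P.Monic) (hQ : Q.degree < P.degree) : (pencil P Q).Monic :=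
  (hP.map C).sub_of_left (degree_C_X_mul_map_C_lt hQ)

theorem degree_pencil (hQ : Q.degree < P.degree) : (pencil P Q).degree = P.degree := by
  rw [pencil, degree_sub_eq_left_of_degree_lt (degree_C_X_mul_map_C_lt hQ),
    degree_map_eq_of_injective C_injective]

theorem map_evalRingHom_pencil (μ : R) : (pencil P Q).map (evalRingHom μ) = P - C μ * Q := by
  simp [pencil, Polynomial.map_map, evalRingHom_comp_C]

theorem eval_coeff_modByMonic_pencil [Nontrivial R] (hP : P.Monic) (hQ : Q.degree < P.degree)
    (G : R[X][X]) (μ : R) :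
    ((G %ₘ pencil P Q).coeff (P.natDegree - 1)).eval μ =
      residue (P - C μ * Q) (G.map (evalRingHom μ)) := by
  rw [residue_apply, natDegree_sub_C_mul hQ, ← map_evalRingHom_pencil,
    ← map_modByMonic _ (monic_pencil hP hQ), coeff_map, coe_evalRingHom]

-- Modulo `μ²`, dividing by `P - μ Q` is dividing by `P`, with `μ (A₀ /ₘ P) Q` moved into the
-- `μ`-coefficient.
theorem coeff_one_coeff_modByMonic_pencil [Nontrivial R] (hP : P.Monic)
    (hQ : Q.degree < P.degree) (A₀ A₁ : R[X]) (B : R[X][X]) :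
    (((A₀.map C + C X * A₁.map C + C X ^ 2 * B) %ₘ pencil P Q).coeff
      (P.natDegree - 1)).coeff 1 = residue P (A₁ + A₀ /ₘ P * Q) := by
  set S := pencil P Q with hSdef
  have hS : S.Monic := monic_pencil hP hQ
  rw [pencil] at hSdef
  set q₁ := (A₁ + A₀ /ₘ P * Q) /ₘ P
  set r₁ := (A₁ + A₀ /ₘ P * Q) %ₘ P
  set B' := B + q₁.map C * Q.map C with hB'
  have e₀ := congrArg (map C) (modByMonic_add_div A₀ P)
  have e₁ := congrArg (map C) (modByMonic_add_div (A₁ + A₀ /ₘ P * Q) P)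
  simp only [Polynomial.map_add, Polynomial.map_mul] at e₀ e₁
  have hdeg : ((A₀ %ₘ P).map C + C X * r₁.map C + C X ^ 2 * (B' %ₘ S)).degree < S.degree := by
    have hlt (p : R[X]) (hp : p.degree < P.degree) : (p.map C).degree < S.degree :=
      degree_map_le.trans_lt (hp.trans_eq (degree_pencil hQ).symm)
    refine (degree_add_le _ _).trans_lt (max_lt ((degree_add_le _ _).trans_lt (max_lt ?_ ?_)) ?_)
    · exact hlt _ (degree_modByMonic_lt _ hP)
    · exact (degree_C_mul_le _ _).trans_lt (hlt _ (degree_modByMonic_lt _ hP))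
    · rw [← C_pow]
      exact (degree_C_mul_le _ _).trans_lt (degree_modByMonic_lt _ hS)
  have hmod := (div_modByMonic_unique (f := A₀.map C + C X * A₁.map C + C X ^ 2 * B)
    ((A₀ /ₘ P).map C + C X * q₁.map C + C X ^ 2 * (B' /ₘ S)) _ hS ⟨by
      linear_combination e₀ + C X * e₁ + C X ^ 2 * modByMonic_add_div B' S - C X ^ 2 * hB'
        + ((A₀ /ₘ P).map C + C X * q₁.map C) * hSdef, hdeg⟩).2
  rw [hmod, residue_apply, ← C_pow, coeff_add, coeff_C_mul]
  simp [r₁, coeff_X_pow_mul']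

/-- The derivative at `μ = 0` of `μ ↦ ∑ h (t - μ)` over the roots `t` of `P - μ Q`
(see `exists_eval_eq_residue_pencil_and_coeff_one`). -/
noncomputable def firstVariation (P Q : R[X]) : R[X] →ₗ[R] R :=
  residue P ∘ₗ LinearMap.mulRight R Q ∘ₗ divByMonicHom P ∘ₗ LinearMap.mulRight R (derivative P)
    - residue P ∘ₗ LinearMap.mulRight R (derivative P) ∘ₗ derivative
    - residue P ∘ₗ LinearMap.mulRight R (derivative Q)

theorem firstVariation_apply (h : R[X]) : firstVariation P Q h =
    residue P (h * derivative P /ₘ P * Q) - residue P (derivative h * derivative P)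
      - residue P (h * derivative Q) := rfl

theorem exists_eval_eq_residue_pencil_and_coeff_one [Nontrivial R] (hP : P.Monic)
    (hQ : Q.degree < P.degree) (h : R[X]) :
    ∃ φ : R[X], (∀ μ, φ.eval μ =
        residue (P - C μ * Q) (h.comp (X - C μ) * derivative (P - C μ * Q))) ∧
      φ.coeff 1 = firstVariation P Q h := by
  set G := (h.map C).comp (X - C X) * derivative (pencil P Q)
  refine ⟨(G %ₘ pencil P Q).coeff (P.natDegree - 1), fun μ ↦ ?_, ?_⟩
  · rw [eval_coeff_modByMonic_pencil hP hQ, Polynomial.map_mul, ← derivative_map,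
      map_evalRingHom_pencil, Polynomial.map_comp]
    simp [Polynomial.map_map, evalRingHom_comp_C]
  · obtain ⟨k, hk⟩ := exists_comp_X_sub_C_eq (h.map C) X
    have hG : G = (h * derivative P).map C
        + C X * (-(derivative h * derivative P + h * derivative Q)).map C
        + C X ^ 2 * (k * (derivative P).map C - C X * k * (derivative Q).map C
          + (derivative h).map C * (derivative Q).map C) := by
      simp only [G, pencil, hk, derivative_sub, derivative_C_mul, derivative_map,
        Polynomial.map_mul, Polynomial.map_add, Polynomial.map_neg]
      ring
    rw [hG, coeff_one_coeff_modByMonic_pencil hP hQ, firstVariation_apply]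
    simp only [map_add, map_neg]
    ring

theorem dvd_of_firstVariation_eq_zero [Nontrivial R] (hP : P.Monic)
    (hT : firstVariation P Q = 0) {g P₁ P₂ : R[X]} (h₁ : P = g * P₁)
    (h₂ : derivative P = g * P₂) :
    P ∣ P₂ * (Q - derivative P) - P₁ * derivative (Q - derivative P) := by
  refine dvd_of_forall_residue_mul_eq_zero hP fun k ↦ ?_
  have hdiv : P₁ * k * derivative P /ₘ P = k * P₂ := by
    rw [show P₁ * k * derivative P = P * (k * P₂) by
      linear_combination P₁ * k * h₂ - k * P₂ * h₁, mul_divByMonic_cancel_left _ hP]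
  have hT₁ := LinearMap.congr_fun hT (P₁ * k)
  have hder := residue_derivative hP (P₁ * k * derivative P)
  rw [firstVariation_apply, hdiv, LinearMap.zero_apply] at hT₁
  rw [hdiv, derivative_mul, map_add] at hder
  rw [show k * (P₂ * (Q - derivative P) - P₁ * derivative (Q - derivative P)) =
      k * P₂ * Q - derivative P * (k * P₂) - P₁ * k * derivative Q
        + P₁ * k * derivative (derivative P) by rw [derivative_sub]; ring,
    map_add, map_sub, map_sub]
  linear_combination hT₁ + hder

theorem wronskian_mul_mul (u a b : R[X]) :
    wronskian (u * a) (u * b) = u ^ 2 * wronskian a b := by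
  simp only [wronskian, derivative_mul]; ring

end CommRing

section Field

variable {K : Type*} [Field K]

theorem residue_mul_derivative_eq_sum_roots {S : K[X]} (hS : S.Monic) (hsplit : S.Splits)
    (g : K[X]) : residue S (g * derivative S) = (S.roots.map g.eval).sum := by
  conv_lhs => rw [hsplit.eq_prod_roots_of_monic hS]
  exact residue_mul_derivative_prod_X_sub_C _ g

theorem mul_gcd_dvd_wronskian_of_firstVariation_eq_zero [DecidableEq K] {P Q : K[X]}
    (hP : P.Monic) (hT : firstVariation P Q = 0) :
    P * EuclideanDomain.gcd P (derivative P) ∣ wronskian (Q - derivative P) P := by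
  obtain ⟨P₁, h₁⟩ := EuclideanDomain.gcd_dvd_left P (derivative P)
  obtain ⟨P₂, h₂⟩ := EuclideanDomain.gcd_dvd_right P (derivative P)
  have hW : wronskian (Q - derivative P) P = EuclideanDomain.gcd P (derivative P) *
      (P₂ * (Q - derivative P) - P₁ * derivative (Q - derivative P)) := by
    rw [wronskian]
    linear_combination (Q - derivative P) * h₂ - derivative (Q - derivative P) * h₁
  rw [hW, mul_comm P]
  exact mul_dvd_mul_left _ (dvd_of_firstVariation_eq_zero hP hT h₁ h₂)

variable [CharZero K]

theorem apply_X_pow_eq_zero_of_forall_apply_X_sub_C_pow (L : K[X] →ₗ[K] K) {k : ℕ}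
    (hL : ∀ a : K, L ((X - C a) ^ k) = 0) {i : ℕ} (hi : i ≤ k) : L (X ^ i) = 0 := by
  set Ψ : K[X] := ∑ j ∈ Finset.range (k + 1), monomial j ((-1) ^ j * k.choose j * L (X ^ (k - j)))
  have hΨ : Ψ = 0 := by
    refine Polynomial.funext fun a ↦ ?_
    rw [eval_zero, ← hL a, sub_eq_neg_add, ← C_neg, add_pow, map_sum, eval_finsetSum]
    refine Finset.sum_congr rfl fun j _ ↦ ?_
    rw [← C_pow, ← C_eq_natCast, eval_monomial, mul_assoc (C _), mul_comm (X ^ _), ← mul_assoc,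
      ← C_mul, ← smul_eq_C_mul, map_smul, smul_eq_mul, neg_pow]
    ring
  have hcoeff := congrArg (coeff · (k - i)) hΨ
  simp only [Ψ, finsetSum_coeff, coeff_monomial, Finset.sum_ite_eq', Finset.mem_range,
    coeff_zero] at hcoeff
  rw [if_pos (by omega), Nat.sub_sub_self hi] at hcoeff
  simpa [(Nat.choose_pos (Nat.sub_le k i)).ne'] using hcoeff

theorem eq_zero_of_forall_apply_X_sub_C_pow_two_mul (L : K[X] →ₗ[K] K)
    (hL : ∀ (a : K) (m : ℕ), L ((X - C a) ^ (2 * m)) = 0) : L = 0 := by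
  refine lhom_ext' fun i ↦ LinearMap.ext fun c ↦ ?_
  rw [LinearMap.comp_apply, ← C_mul_X_pow_eq_monomial, ← smul_eq_C_mul, map_smul,
    apply_X_pow_eq_zero_of_forall_apply_X_sub_C_pow L (hL · i) (by omega : i ≤ 2 * i)]
  simp

theorem not_pow_dvd_derivative_pow_mul {ρ : K} {j : ℕ} {T : K[X]} (hj : j ≠ 0)
    (hT : ¬X - C ρ ∣ T) : ¬(X - C ρ) ^ j ∣ derivative ((X - C ρ) ^ j * T) := by
  obtain ⟨i, rfl⟩ := Nat.exists_eq_succ_of_ne_zero hj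
  rw [derivative_mul, derivative_X_sub_C_pow, dvd_add_left (dvd_mul_right _ _),
    Nat.succ_sub_one, mul_comm (C _), mul_assoc, pow_succ,
    mul_dvd_mul_iff_left (pow_ne_zero _ (X_sub_C_ne_zero ρ)),
    (isUnit_C.2 (Nat.cast_ne_zero.2 hj).isUnit).dvd_mul_left]
  exact hT

theorem pow_rootMultiplicity_dvd_of_dvd_wronskian {P D : K[X]} {ρ : K} (hP : P ≠ 0)
    (h : (X - C ρ) ^ (2 * P.rootMultiplicity ρ - 1) ∣ wronskian D P) :
    (X - C ρ) ^ P.rootMultiplicity ρ ∣ D := by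
  set m := P.rootMultiplicity ρ
  by_contra hD
  have hD0 : D ≠ 0 := by rintro rfl; exact hD (dvd_zero _)
  obtain ⟨E, hDE, hE⟩ := D.exists_eq_pow_rootMultiplicity_mul_and_not_dvd hD0 ρ
  set d := D.rootMultiplicity ρ
  have hdm : d < m := by
    by_contra! hmd
    exact hD (hDE ▸ (pow_dvd_pow _ hmd).mul_right E)
  obtain ⟨T, hPT, hT⟩ := P.exists_eq_pow_rootMultiplicity_mul_and_not_dvd hP ρ
  set P₀ := (X - C ρ) ^ (m - d) * T
  have hW : wronskian D P = ((X - C ρ) ^ d) ^ 2 * wronskian E P₀ := by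
    rw [← wronskian_mul_mul, hDE, hPT, ← mul_assoc, ← pow_add, Nat.add_sub_cancel' hdm.le]
  have hWE : (X - C ρ) ^ (m - d) ∣ wronskian E P₀ := by
    have : ((X - C ρ) ^ d) ^ 2 * (X - C ρ) ^ (m - d) ∣ ((X - C ρ) ^ d) ^ 2 * wronskian E P₀ := by
      rw [← hW, ← pow_mul, ← pow_add]
      exact (pow_dvd_pow _ (by omega)).trans h
    exact (mul_dvd_mul_iff_left (pow_ne_zero _ (pow_ne_zero _ (X_sub_C_ne_zero ρ)))).1 this
  have hEP₀ : (X - C ρ) ^ (m - d) ∣ E * derivative P₀ := by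
    have := dvd_add hWE ((dvd_mul_right _ T).mul_left (derivative E))
    rwa [wronskian, sub_add_cancel] at this
  have hcop : IsCoprime ((X - C ρ) ^ (m - d)) E :=
    ((irreducible_X_sub_C ρ).coprime_iff_not_dvd.2 hE).pow_left
  exact not_pow_dvd_derivative_pow_mul (by omega) hT (hcop.dvd_of_dvd_mul_left hEP₀)

theorem dvd_of_mul_gcd_derivative_dvd_wronskian [DecidableEq K] {P D : K[X]} (hP : P.Splits)
    (hP0 : P ≠ 0) (h : P * EuclideanDomain.gcd P (derivative P) ∣ wronskian D P) : P ∣ D := by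
  rcases eq_or_ne D 0 with rfl | hD0
  · exact dvd_zero P
  refine hP.dvd_of_roots_le_roots hP0 (Multiset.le_iff_count.2 fun ρ ↦ ?_)
  rw [count_roots, count_roots, le_rootMultiplicity_iff hD0]
  refine pow_rootMultiplicity_dvd_of_dvd_wronskian hP0 (dvd_trans ?_ h)
  have hPρ := pow_rootMultiplicity_dvd P ρ
  rcases Nat.eq_zero_or_pos (P.rootMultiplicity ρ) with h0 | hpos
  · simp [h0]
  rw [show 2 * P.rootMultiplicity ρ - 1 = P.rootMultiplicity ρ + (P.rootMultiplicity ρ - 1) by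
    omega, pow_add]
  exact mul_dvd_mul hPρ (EuclideanDomain.dvd_gcd ((pow_dvd_pow _ (Nat.sub_le _ _)).trans hPρ)
    (pow_sub_one_dvd_derivative_of_pow_dvd hPρ))

end Field

theorem roots_comp_X_add_C {D : Type*} [CommRing D] [IsDomain D] (p : D[X]) (μ : D) :
    (p.comp (X + C μ)).roots = p.roots.map (· - μ) := by
  rw [show (X + C μ : D[X]) = C 1 * X + C μ by simp, roots_comp_C_mul_X_add_C _ _ _ isUnit_one]
  simp

end Polynomial

theorem isLocalMin_sum_roots_of_polyMaj {P Q : ℝ[X]} {ε : ℝ} (hε : 0 < ε)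
    (hmin : ∀ μ : ℝ, |μ| < ε → polyMaj P (P.comp (X + C μ) - C μ * Q.comp (X + C μ)))
    {f : ℝ → ℝ} (hf : ConvexOn ℝ Set.univ f) :
    IsLocalMin (fun μ ↦ ((P - C μ * Q).roots.map fun t ↦ f (t - μ)).sum) 0 := by
  filter_upwards [Metric.ball_mem_nhds (0 : ℝ) hε] with μ hμ
  rw [Metric.mem_ball, dist_zero_right, Real.norm_eq_abs] at hμ
  have := hmin μ hμ f hf
  rw [← C_mul_comp, ← sub_comp, roots_comp_X_add_C, Multiset.map_map] at this
  simpa using this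

theorem firstVariation_eq_zero_of_isLocalMin {P Q : ℝ[X]} (hP : P.Monic)
    (hQ : Q.degree < P.degree) (hsplit : ∀ μ : ℝ, (P - C μ * Q).Splits) (h : ℝ[X])
    (hmin : IsLocalMin (fun μ ↦ ((P - C μ * Q).roots.map fun t ↦ h.eval (t - μ)).sum) 0) :
    firstVariation P Q h = 0 := by
  obtain ⟨φ, hφ, hφ₁⟩ := exists_eval_eq_residue_pencil_and_coeff_one hP hQ h
  have hφ' : (fun μ ↦ φ.eval μ) =
      fun μ ↦ ((P - C μ * Q).roots.map fun t ↦ h.eval (t - μ)).sum := by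
    ext μ
    rw [hφ, residue_mul_derivative_eq_sum_roots
      (hP.sub_of_left ((degree_C_mul_le _ _).trans_lt hQ)) (hsplit μ)]
    simp
  have := (hφ' ▸ hmin).deriv_eq_zero
  rwa [Polynomial.deriv, ← coeff_zero_eq_eval_zero, coeff_derivative, zero_add, Nat.cast_zero,
    zero_add, mul_one, hφ₁] at this

theorem convexOn_eval_X_sub_C_pow_two_mul (a : ℝ) (m : ℕ) :
    ConvexOn ℝ Set.univ fun x ↦ ((X - C a) ^ (2 * m)).eval x := by
  simpa [sub_eq_neg_add, Function.comp_def] using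
    ((even_two_mul m).convexOn_pow (𝕜 := ℝ)).translate_right (-a)

theorem local_min_implies_derivative_general (n : ℕ) (hn : 1 ≤ n) (P Q : Polynomial ℝ)
    (hPm : P.Monic) (hPd : P.natDegree = n)
    (hQd : Q.natDegree ≤ n - 1)
    (hpencil : ∀ l : ℝ, (P - C l * Q).roots.card = n)
    (ε : ℝ) (hε : 0 < ε)
    (hmin : ∀ μ : ℝ, |μ| < ε →
      polyMaj P (P.comp (X + C μ) - C μ * Q.comp (X + C μ))) :
    Q = Polynomial.derivative P := by
  have hQ : Q.degree < P.degree := by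
    rw [degree_eq_natDegree hPm.ne_zero, hPd]
    exact degree_le_natDegree.trans_lt (by exact_mod_cast (by omega : Q.natDegree < n))
  have hsplit (μ : ℝ) : (P - C μ * Q).Splits := by
    rw [splits_iff_card_roots, hpencil, natDegree_sub_C_mul hQ, hPd]
  have hvar : firstVariation P Q = 0 :=
    eq_zero_of_forall_apply_X_sub_C_pow_two_mul _ fun a m ↦
      firstVariation_eq_zero_of_isLocalMin hPm hQ hsplit _
        (isLocalMin_sum_roots_of_polyMaj hε hmin (convexOn_eval_X_sub_C_pow_two_mul a m))
  have hdvd : P ∣ Q - derivative P :=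
    dvd_of_mul_gcd_derivative_dvd_wronskian (by simpa using hsplit 0) hPm.ne_zero
      (mul_gcd_dvd_wronskian_of_firstVariation_eq_zero hPm hvar)
  exact sub_eq_zero.1 <| eq_zero_of_dvd_of_degree_lt hdvd <|
    (degree_sub_le _ _).trans_lt (max_lt hQ (degree_derivative_lt hPm.ne_zero))

theorem local_min_implies_derivative (n : ℕ) (hn : 1 ≤ n) (P Q : Polynomial ℝ)
    (hPm : P.Monic) (hPd : P.natDegree = n)
    (hQd : Q.natDegree ≤ n - 1) (hQc : Q.coeff (n - 1) = n)
    (hpencil : ∀ l : ℝ, (P - C l * Q).roots.card = n)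
    (ε : ℝ) (hε : 0 < ε)
    (hmin : ∀ μ : ℝ, |μ| < ε →
      polyMaj P (P.comp (X + C μ) - C μ * Q.comp (X + C μ))) :
    Q = Polynomial.derivative P :=
  local_min_implies_derivative_general n hn P Q hPm hPd hQd hpencil ε hε hmin
end

section
/- For every monic hyperbolic polynomial P of degree n ≥ 1, every real λ, and every convex function f : ℝ → ℝ: Σ_{i=1}^n f(x_i) ≤ Σ_{i=1}^n f(ζ_i − λ), where x_1, …, x_n are the roots of P and ζ_1, …, ζ_n are the roots of P − λP′ (with multiplicity). -/
/-!
For `p = ∏ (X - C xᵢ)` the symmetric matrix `B = diag x + λ 𝟙𝟙ᵀ` has characteristic polynomial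
`p - λ p'` (matrix determinant lemma), so the `ζⱼ` are the eigenvalues of `B`. If `U` is an
orthogonal matrix of eigenvectors, the diagonal of `B = U diag ζ Uᵀ` reads
`xᵢ + λ = ∑ⱼ Uᵢⱼ² ζⱼ` (Schur), and `(Uᵢⱼ²)` is doubly stochastic. Hence
`xᵢ = ∑ⱼ Uᵢⱼ² (ζⱼ - λ)`, and Jensen's inequality in each row, summed over `i`, gives the claim.
-/

open Polynomial Matrix Finset

theorem ConvexOn.sum_le_sum_of_mem_doublyStochastic {n : Type*} [Fintype n] [DecidableEq n]
    {s : Set ℝ} {f : ℝ → ℝ} (hf : ConvexOn ℝ s f) {M : Matrix n n ℝ}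
    (hM : M ∈ doublyStochastic ℝ n) {d : n → ℝ} (hd : ∀ j, d j ∈ s) :
    ∑ i, f ((M *ᵥ d) i) ≤ ∑ j, f (d j) :=
  calc ∑ i, f ((M *ᵥ d) i) ≤ ∑ i, ∑ j, M i j * f (d j) := by
        gcongr with i
        exact hf.map_sum_le (fun j _ => nonneg_of_mem_doublyStochastic hM)
          (sum_row_of_mem_doublyStochastic hM i) (fun j _ => hd j)
    _ = ∑ j, f (d j) := by
        rw [sum_comm]
        simp_rw [← sum_mul, sum_col_of_mem_doublyStochastic hM, one_mul]

theorem Matrix.of_norm_sq_mem_doublyStochastic {n 𝕜 : Type*} [Fintype n] [DecidableEq n]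
    [RCLike 𝕜] {U : Matrix n n 𝕜} (hU : U ∈ unitaryGroup n 𝕜) :
    of (fun i j => ‖U i j‖ ^ 2) ∈ doublyStochastic ℝ n := by
  have hrow (i : n) : ∑ j, ‖U i j‖ ^ 2 = 1 := by
    have := congrFun (congrFun (mem_unitaryGroup_iff.mp hU) i) i
    simp only [mul_apply, star_apply, RCLike.star_def, RCLike.mul_conj, one_apply_eq] at this
    exact_mod_cast this
  have hcol (j : n) : ∑ i, ‖U i j‖ ^ 2 = 1 := by
    have := congrFun (congrFun (mem_unitaryGroup_iff'.mp hU) j) j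
    simp only [mul_apply, star_apply, RCLike.star_def, RCLike.conj_mul, one_apply_eq] at this
    exact_mod_cast this
  exact mem_doublyStochastic_iff_sum.mpr ⟨fun _ _ => sq_nonneg _, hrow, hcol⟩

theorem Matrix.IsHermitian.re_diag_eq_mulVec_eigenvalues {n 𝕜 : Type*} [Fintype n] [DecidableEq n]
    [RCLike 𝕜] {A : Matrix n n 𝕜} (hA : A.IsHermitian) :
    (fun i => RCLike.re (A i i)) =
      of (fun i j => ‖(hA.eigenvectorUnitary : Matrix n n 𝕜) i j‖ ^ 2) *ᵥ hA.eigenvalues := by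
  set U : Matrix n n 𝕜 := (hA.eigenvectorUnitary : Matrix n n 𝕜)
  have h : A = U * diagonal (RCLike.ofReal ∘ hA.eigenvalues) * star U := hA.spectral_theorem
  ext i
  rw [congrFun (congrFun h i) i, mul_apply]
  simp_rw [mul_diagonal, Function.comp_apply, star_apply, RCLike.star_def,
    mul_right_comm _ _ ((starRingEnd 𝕜) _), RCLike.mul_conj]
  simp_rw [← RCLike.ofReal_pow, ← RCLike.ofReal_mul, ← RCLike.ofReal_sum, RCLike.ofReal_re]
  rfl

theorem Polynomial.eval_derivative_prod_X_sub_C {K ι : Type*} [Field K] [Fintype ι]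
    [DecidableEq ι] (x : ι → K) {t : K} (ht : ∀ i, t ≠ x i) :
    eval t (derivative (∏ i, (X - C (x i)))) = eval t (∏ i, (X - C (x i))) * ∑ i, (t - x i)⁻¹ := by
  have hne (i : ι) : t - x i ≠ 0 := sub_ne_zero.mpr (ht i)
  simp only [derivative_prod_finset, derivative_X_sub_C, mul_one, eval_finsetSum, eval_prod,
    eval_sub, eval_X, eval_C, mul_sum]
  refine sum_congr rfl fun i _ => ?_
  rw [← mul_prod_erase univ _ (mem_univ i), mul_comm (t - x i), mul_assoc,
    mul_inv_cancel₀ (hne i), mul_one]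

theorem Matrix.det_diagonal_add_const {K ι : Type*} [Field K] [Fintype ι] [DecidableEq ι]
    {d : ι → K} (hd : ∀ i, d i ≠ 0) (c : K) :
    (diagonal d + of fun _ _ => c).det = (∏ i, d i) * (1 + c * ∑ i, (d i)⁻¹) := by
  have hfactor : diagonal d + of (fun _ _ => c) =
      diagonal d *
        (1 + replicateCol Unit (fun i => c / d i) * replicateRow Unit (fun _ => (1 : K))) := by
    ext i j
    rw [Matrix.mul_add, Matrix.mul_one, add_apply, add_apply, diagonal_mul]
    simp [mul_apply, mul_div_cancel₀ _ (hd i)]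
  rw [hfactor, det_mul, det_diagonal, det_one_add_replicateCol_mul_replicateRow]
  simp [dotProduct, mul_sum, div_eq_mul_inv]

theorem Matrix.charpoly_diagonal_add_const {K ι : Type*} [Field K] [Infinite K] [Fintype ι]
    [DecidableEq ι] (x : ι → K) (c : K) :
    (diagonal x + of fun _ _ => c).charpoly =
      ∏ i, (X - C (x i)) - C c * derivative (∏ i, (X - C (x i))) := by
  refine eq_of_infinite_eval_eq _ _ ((Set.finite_range x).infinite_compl.mono fun t ht => ?_)
  have ht' (i : ι) : t ≠ x i := fun h => ht ⟨i, h.symm⟩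
  have hshift : scalar ι t - (diagonal x + of fun _ _ => c) =
      diagonal (fun i => t - x i) + of fun _ _ => -c := by
    ext i j
    by_cases h : i = j <;> simp [h]
    ring
  simp only [Set.mem_ofPred_eq, eval_charpoly, hshift,
    det_diagonal_add_const (fun i => sub_ne_zero.mpr (ht' i)), eval_sub, eval_mul, eval_C,
    eval_derivative_prod_X_sub_C x ht', eval_prod, eval_X]
  ring

theorem ConvexOn.sum_le_sum_map_roots_sub_C_mul_derivative {ι : Type*} [Fintype ι]
    [DecidableEq ι] {f : ℝ → ℝ} (hf : ConvexOn ℝ Set.univ f) (x : ι → ℝ) (l : ℝ) :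
    ∑ i, f (x i) ≤ ((∏ i, (X - C (x i)) - C l * derivative (∏ i, (X - C (x i)))).roots.map
      fun t => f (t - l)).sum := by
  set B : Matrix ι ι ℝ := diagonal x + of fun _ _ => l
  have hB : B.IsHermitian := (isHermitian_diagonal x).add (by ext; rfl)
  have hroots : (∏ i, (X - C (x i)) - C l * derivative (∏ i, (X - C (x i)))).roots =
      univ.val.map hB.eigenvalues := by
    rw [← charpoly_diagonal_add_const, hB.roots_charpoly_eq_eigenvalues, RCLike.ofReal_real_eq_id,
      Function.id_comp]
  set M := of fun i j => ‖(hB.eigenvectorUnitary : Matrix ι ι ℝ) i j‖ ^ 2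
  have hM : M ∈ doublyStochastic ℝ ι := of_norm_sq_mem_doublyStochastic hB.eigenvectorUnitary.2
  have hx : x = M *ᵥ (hB.eigenvalues - fun _ => l) := by
    have hconst : M *ᵥ (fun _ => l) = fun _ => l := by
      rw [show (fun _ => l) = l • (1 : ι → ℝ) by ext; simp, mulVec_smul,
        mulVec_one_of_mem_doublyStochastic hM]
    rw [mulVec_sub, hconst, ← hB.re_diag_eq_mulVec_eigenvalues]
    ext i
    simp [B]
  rw [hroots, Multiset.map_map]
  calc ∑ i, f (x i) = ∑ i, f ((M *ᵥ (hB.eigenvalues - fun _ => l)) i) := by rw [← hx]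
    _ ≤ ∑ j, f (hB.eigenvalues j - l) :=
      hf.sum_le_sum_of_mem_doublyStochastic hM fun _ => Set.mem_univ _

theorem convex_sum_roots_le_general (n : ℕ) (P : Polynomial ℝ)
    (hPm : P.Monic) (hPd : P.natDegree = n) (hhyp : P.roots.card = n)
    (l : ℝ) (f : ℝ → ℝ) (hf : ConvexOn ℝ Set.univ f) :
    (P.roots.map f).sum ≤
      ((P - C l * Polynomial.derivative P).roots.map (fun t => f (t - l))).sum := by
  classical
  have hP : P = ∏ r : P.roots, (X - C (r : ℝ)) := by
    conv_lhs => rw [← prod_multiset_X_sub_C_of_monic_of_roots_card_eq hPm (hhyp.trans hPd.symm)]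
    rw [← Multiset.map_univ_comp_coe]
    rfl
  have hsum : (P.roots.map f).sum = ∑ r : P.roots, f r := by
    rw [← Multiset.map_univ_comp_coe]
    rfl
  have hle := hf.sum_le_sum_map_roots_sub_C_mul_derivative (fun r : P.roots => (r : ℝ)) l
  rwa [← hP, ← hsum] at hle

theorem convex_sum_roots_le (n : ℕ) (hn : 1 ≤ n) (P : Polynomial ℝ)
    (hPm : P.Monic) (hPd : P.natDegree = n) (hhyp : P.roots.card = n)
    (l : ℝ) (f : ℝ → ℝ) (hf : ConvexOn ℝ Set.univ f) :
    (P.roots.map f).sum ≤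
      ((P - C l * Polynomial.derivative P).roots.map (fun t => f (t - l))).sum :=
  convex_sum_roots_le_general n P hPm hPd hhyp l f hf
end

section
/- Let P(z) = z^n − 1 with n ≥ 5 and let λ ∈ ℂ*. If |λ| is small enough, then the complex root multisets (viewed as multisets in ℝ²) of P and of (1 − λD)e^{λD}P are incomparable in the multivariate spectral order; in particular, neither convex hull of the zero sets contains the other: there exist roots z'(λ) of P(z+λ) − λP′(z+λ) with |z'| > 1 and with |z'| < 1. -/
/-!
Put `w = z + λ`: `z` is a root of `(1 - λD)e^{λD}P` iff `w` is a root of `P - λP'`. For an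
`n`-th root of unity `u`, `w = u^{n-1} s` with `s` a root of `P - μP'`, `μ = uλ`, and then
`|z| = |s - μ|`. Since some root of a polynomial `p` lies within `deg p · |p(a)| / |p'(a)|` of
any point `a`, `P - μP'` has a root `s = 1 + μ + (n-1)μ²/2 + O(μ³)`, so
`|s - μ| = 1 + (n-1)/2 · Re(μ²) + O(μ³)`. For `n ≥ 5` the `n` reals `Re(u²λ²)` have sum `0`
and sum of squares `n|λ|⁴/2`, so one of them is `≥ |λ|²/2` and another is `≤ -|λ|²/2`.
-/

open Polynomial Filter Asymptotics Topology Finset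

theorem Finset.exists_half_le_of_sum_eq_zero {ι : Type*} {s : Finset ι} {f : ι → ℝ} {B : ℝ}
    (hs : s.Nonempty) (hB : 0 < B) (hlow : ∀ i ∈ s, -B ≤ f i) (hsum : ∑ i ∈ s, f i = 0)
    (hsq : #s * B ^ 2 / 2 ≤ ∑ i ∈ s, f i ^ 2) : ∃ i ∈ s, B / 2 ≤ f i := by
  obtain ⟨i, hi, hmax⟩ := s.exists_max_image f hs
  refine ⟨i, hi, ?_⟩
  -- every `f j` lies in `[-B, f i]`, so `(f j + B) (f i - f j) ≥ 0`
  have hsq_le : ∑ j ∈ s, f j ^ 2 ≤ #s * (f i * B) := by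
    calc ∑ j ∈ s, f j ^ 2 ≤ ∑ j ∈ s, ((f i - B) * f j + f i * B) :=
          sum_le_sum fun j hj => by nlinarith [hlow j hj, hmax j hj]
      _ = #s * (f i * B) := by simp [sum_add_distrib, ← mul_sum, hsum]
  have hcard : (0 : ℝ) < #s := by exact_mod_cast hs.card_pos
  by_contra! h
  nlinarith [mul_lt_mul_of_pos_right h hB]

theorem Complex.re_sq (z : ℂ) : z.re ^ 2 = ((z ^ 2).re + ‖z‖ ^ 2) / 2 := by
  rw [Complex.sq_norm, Complex.normSq_apply]
  simp [sq]

theorem exists_pow_eq_one_norm_div_two_le_re_sq_mul {n : ℕ} (hn : 3 ≤ n) (hn4 : n ≠ 4)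
    {ω : ℂ} (hω : ω ≠ 0) : ∃ u : ℂ, u ^ n = 1 ∧ ‖ω‖ / 2 ≤ (u ^ 2 * ω).re := by
  have hn0 : n ≠ 0 := by omega
  have hζ := Complex.isPrimitiveRoot_exp n hn0
  set ζ := Complex.exp (2 * Real.pi * Complex.I / n)
  have hgeom : ∀ j, ¬ n ∣ j → ∑ k ∈ range n, (ζ ^ j) ^ k = 0 := fun j hj => by
    rw [geom_sum_eq ((hζ.pow_eq_one_iff_dvd j).not.2 hj), ← pow_mul, mul_comm, pow_mul,
      hζ.pow_eq_one, one_pow, sub_self, zero_div]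
  have hnorm : ∀ k, ‖(ζ ^ k) ^ 2 * ω‖ = ‖ω‖ := fun k => by
    simp [Complex.norm_eq_one_of_pow_eq_one hζ.pow_eq_one hn0]
  have h2 : ¬ n ∣ 2 := fun h => by have := Nat.le_of_dvd two_pos h; omega
  have h4 : ¬ n ∣ 4 := fun h => by
    have := Nat.le_of_dvd four_pos h
    interval_cases n <;> simp_all
  have hsum : ∑ k ∈ range n, ((ζ ^ k) ^ 2 * ω).re = 0 := by
    have : ∀ k, (ζ ^ k) ^ 2 * ω = (ζ ^ 2) ^ k * ω := fun k => by ring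
    simp_rw [← Complex.re_sum, this, ← sum_mul, hgeom 2 h2, zero_mul, Complex.zero_re]
  have hsq : ∑ k ∈ range n, ((ζ ^ k) ^ 2 * ω).re ^ 2 = #(range n) * ‖ω‖ ^ 2 / 2 := by
    have : ∀ k, ((ζ ^ k) ^ 2 * ω) ^ 2 = (ζ ^ 4) ^ k * ω ^ 2 := fun k => by ring
    simp_rw [Complex.re_sq, hnorm, this, ← sum_div, sum_add_distrib, ← Complex.re_sum,
      ← sum_mul, hgeom 4 h4]
    simp
  have hlow : ∀ k ∈ range n, -‖ω‖ ≤ ((ζ ^ k) ^ 2 * ω).re := fun k _ =>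
    neg_le_of_abs_le (hnorm k ▸ Complex.abs_re_le_norm _)
  obtain ⟨k, -, hk⟩ := exists_half_le_of_sum_eq_zero (by simp; omega) (norm_pos_iff.2 hω)
    hlow hsum hsq.ge
  exact ⟨ζ ^ k, by rw [← pow_mul, mul_comm, pow_mul, hζ.pow_eq_one, one_pow], hk⟩

theorem Polynomial.exists_isRoot_norm_sub_mul_le {𝕜 : Type*} [NormedField 𝕜] [IsAlgClosed 𝕜]
    {p : 𝕜[X]} (hp : 0 < p.natDegree) (a : 𝕜) :
    ∃ w, p.IsRoot w ∧ ‖a - w‖ * ‖p.derivative.eval a‖ ≤ p.natDegree * ‖p.eval a‖ := by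
  by_cases hpa : p.eval a = 0
  · exact ⟨a, hpa, by simp [hpa]⟩
  have hsplit : p.Splits := IsAlgClosed.splits p
  obtain ⟨w, hw, hmin⟩ := Multiset.exists_min_image (fun z => ‖a - z‖)
    (hsplit.roots_ne_zero hp.ne')
  have hwroot : p.IsRoot w := isRoot_of_mem_roots hw
  have hd : 0 < ‖a - w‖ := norm_pos_iff.2 (sub_ne_zero.2 fun h => hpa (h ▸ hwroot))
  refine ⟨w, hwroot, ?_⟩
  -- `p'(a) / p(a) = ∑ 1 / (a - z)` over the roots `z`, each of which is at distance `≥ ‖a - w‖`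
  have hsum : ‖(p.roots.map fun z => 1 / (a - z)).sum‖ ≤ p.natDegree * (1 / ‖a - w‖) := by
    calc _ ≤ (p.roots.map fun z => ‖1 / (a - z)‖).sum := by
          simpa [Multiset.map_map] using norm_multiset_sum_le (p.roots.map fun z => 1 / (a - z))
      _ ≤ (p.roots.map fun _ => 1 / ‖a - w‖).sum := by
          refine Multiset.sum_map_le_sum_map _ _ fun z hz => ?_
          rw [norm_div, norm_one]
          exact one_div_le_one_div_of_le hd (hmin z hz)
      _ = _ := by simp [hsplit.natDegree_eq_card_roots]
  rw [hsplit.eval_derivative_eq_eval_mul_sum hpa, norm_mul]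
  calc ‖a - w‖ * (‖p.eval a‖ * _) ≤ ‖a - w‖ * (‖p.eval a‖ * (p.natDegree * (1 / ‖a - w‖))) := by
        gcongr
    _ = _ := by field_simp

theorem Polynomial.isBigO_eval_of_X_pow_dvd {𝕜 : Type*} [NormedField 𝕜] {p : 𝕜[X]} {m : ℕ}
    (h : X ^ m ∣ p) : (fun x => p.eval x) =O[𝓝 0] fun x => x ^ m := by
  obtain ⟨q, rfl⟩ := h
  simpa using (isBigO_refl (fun x : 𝕜 => x ^ m) (𝓝 0)).mul
    ((q.continuous.tendsto 0).isBigO_one 𝕜)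

theorem isBigO_one_add_pow_sub_sum {𝕜 : Type*} [NormedField 𝕜] (N k : ℕ) :
    (fun u : 𝕜 => (1 + u) ^ N - ∑ j ∈ range k, (N.choose j : 𝕜) * u ^ j) =O[𝓝 0]
      fun u => u ^ k := by
  have hdvd : X ^ k ∣ (1 + X) ^ N - ∑ j ∈ range k, C (N.choose j : 𝕜) * X ^ j :=
    X_pow_dvd_iff.2 fun d hd => by simp [coeff_one_add_X_pow, mem_range.2 hd]
  simpa [eval_finsetSum] using isBigO_eval_of_X_pow_dvd hdvd

/-- Second-order approximation of the root near `1` of `X ^ n - 1 - μ (X ^ n - 1)'`. -/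
noncomputable def approxRoot (n : ℕ) (μ : ℂ) : ℂ := 1 + μ + (n - 1) / 2 * μ ^ 2

theorem isBigO_eval_approxRoot (n : ℕ) :
    (fun μ : ℂ => (X ^ n - 1 - C μ * derivative (X ^ n - 1)).eval (approxRoot n μ))
      =O[𝓝 0] fun μ => μ ^ 3 := by
  cases n with
  | zero => simpa using isBigO_zero _ _
  | succ N =>
  set u : ℂ → ℂ := fun μ => μ + N / 2 * μ ^ 2
  have hu : u =O[𝓝 0] fun μ => μ := by
    have : (fun μ : ℂ => 1 + N / 2 * μ) =O[𝓝 0] fun _ => (1 : ℂ) :=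
      ((continuous_const.add (continuous_const.mul continuous_id)).tendsto 0).isBigO_one ℂ
    simpa [u, mul_add, ← mul_assoc, sq, mul_comm] using (isBigO_refl (fun μ : ℂ => μ) _).mul this
  have hu0 : Tendsto u (𝓝 0) (𝓝 0) := hu.trans_tendsto tendsto_id
  have hrem₃ := ((isBigO_one_add_pow_sub_sum (N + 1) 3).comp_tendsto hu0).trans (hu.pow 3)
  have hrem₂ := (isBigO_refl (fun μ : ℂ => μ) _).mul
    (((isBigO_one_add_pow_sub_sum N 2).comp_tendsto hu0).trans (hu.pow 2))
    |>.congr_right (g₂ := fun μ => μ ^ 3) fun μ => by ring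
  have hquartic := (isLittleO_pow_pow (𝕜 := ℂ) (show 3 < 4 by norm_num)).isBigO
  -- against the Taylor expansions of `(1 + u) ^ (N + 1)` to order 2 and of `(1 + u) ^ N` to
  -- order 1, the residual is exactly `(N + 1) N³ μ⁴ / 8`
  have key : ∀ μ : ℂ, (X ^ (N + 1) - 1 - C μ * derivative (X ^ (N + 1) - 1)).eval
      (approxRoot (N + 1) μ) =
      ((1 + u μ) ^ (N + 1) - ∑ j ∈ range 3, ((N + 1).choose j : ℂ) * u μ ^ j)
      - (N + 1) * (μ * ((1 + u μ) ^ N - ∑ j ∈ range 2, (N.choose j : ℂ) * u μ ^ j))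
      + (N + 1) * N ^ 3 / 8 * μ ^ 4 := by
    intro μ
    simp only [approxRoot, Nat.cast_add, Nat.cast_one, add_sub_cancel_right, derivative_sub,
      derivative_X_pow_succ, map_add, map_natCast, map_one, derivative_one, sub_zero, eval_sub,
      eval_pow, eval_X, eval_one, eval_mul, eval_C, eval_add, eval_natCast, sum_range_succ,
      range_one, sum_singleton, Nat.choose_zero_right, pow_zero, mul_one, Nat.choose_one_right,
      pow_one, Nat.cast_choose_two, u]
    ring
  simp_rw [key]
  exact (hrem₃.sub (hrem₂.const_mul_left _)).add (hquartic.const_mul_left _)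

theorem tendsto_eval_derivative_approxRoot (n : ℕ) :
    Tendsto (fun μ : ℂ => (derivative (X ^ n - 1 - C μ * derivative (X ^ n - 1))).eval
      (approxRoot n μ)) (𝓝 0) (𝓝 (n : ℂ)) := by
  have hc : Continuous fun μ : ℂ => (derivative (X ^ n - 1 - C μ * derivative (X ^ n - 1))).eval
      (approxRoot n μ) := by
    simp only [approxRoot, derivative_sub, derivative_mul, derivative_C, derivative_one, eval_sub,
      eval_mul, eval_C, zero_mul, zero_add]
    fun_prop
  simpa [approxRoot, derivative_X_pow] using hc.tendsto 0

theorem natDegree_X_pow_sub_one_sub_C_mul_derivative {n : ℕ} (hn : 0 < n) (μ : ℂ) :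
    (X ^ n - 1 - C μ * derivative (X ^ n - 1)).natDegree = n := by
  obtain ⟨N, rfl⟩ : ∃ N, n = N + 1 := ⟨n - 1, by omega⟩
  simp only [derivative_sub, derivative_X_pow, derivative_one, sub_zero]
  compute_degree!

theorem exists_isRoot_norm_sub_approxRoot_le {n : ℕ} (hn : 0 < n) :
    ∃ K, ∀ᶠ μ in 𝓝 (0 : ℂ), ∃ s : ℂ, (X ^ n - 1 - C μ * derivative (X ^ n - 1)).IsRoot s ∧
      ‖s - approxRoot n μ‖ ≤ K * ‖μ‖ ^ 3 := by
  obtain ⟨K, hK⟩ := (isBigO_eval_approxRoot n).bound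
  have hderiv := (tendsto_eval_derivative_approxRoot n).norm.eventually_const_lt
    (u := (n : ℝ) / 2) (by simpa using hn)
  refine ⟨2 * K, ?_⟩
  filter_upwards [hK, hderiv] with μ hKμ hderivμ
  have hdeg := natDegree_X_pow_sub_one_sub_C_mul_derivative hn μ
  obtain ⟨s, hs, hsa⟩ := exists_isRoot_norm_sub_mul_le (hdeg ▸ hn) (approxRoot n μ)
  refine ⟨s, hs, ?_⟩
  rw [hdeg] at hsa
  rw [norm_pow] at hKμ
  rw [norm_sub_rev]
  have hn' : (0 : ℝ) < n := by exact_mod_cast hn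
  nlinarith [mul_le_mul_of_nonneg_left hderivμ.le (norm_nonneg (approxRoot n μ - s))]

theorem Complex.abs_norm_one_add_sub_one_sub_re_le (x : ℂ) :
    |‖1 + x‖ - 1 - x.re| ≤ ‖x‖ ^ 2 / 2 := by
  have hsq : ‖1 + x‖ ^ 2 = 1 + 2 * x.re + ‖x‖ ^ 2 := by
    simp only [Complex.sq_norm, Complex.normSq_apply, Complex.add_re, Complex.add_im,
      Complex.one_re, Complex.one_im]
    ring
  have hdist : |‖1 + x‖ - 1| ≤ ‖x‖ := by
    simpa using abs_norm_sub_norm_le (1 + x) 1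
  rw [abs_le] at hdist ⊢
  have hsq_le : (‖1 + x‖ - 1) ^ 2 ≤ ‖x‖ ^ 2 := sq_le_sq' hdist.1 hdist.2
  constructor <;> nlinarith [sq_nonneg (‖1 + x‖ - 1)]

theorem eventually_exists_isRoot_abs_norm_sub_le {n : ℕ} (hn : 0 < n) {κ : ℝ} (hκ : 0 < κ) :
    ∀ᶠ μ in 𝓝 (0 : ℂ), ∃ s : ℂ, (X ^ n - 1 - C μ * derivative (X ^ n - 1)).IsRoot s ∧
      |‖s - μ‖ - 1 - (n - 1) / 2 * (μ ^ 2).re| ≤ κ * ‖μ‖ ^ 2 := by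
  obtain ⟨K, hK⟩ := exists_isRoot_norm_sub_approxRoot_le hn
  set c : ℝ := (n - 1) / 2
  have hsmall : ∀ᶠ μ : ℂ in 𝓝 0, K * ‖μ‖ + c ^ 2 / 2 * ‖μ‖ ^ 2 < κ := by
    have hcont : Continuous fun μ : ℂ => K * ‖μ‖ + c ^ 2 / 2 * ‖μ‖ ^ 2 := by fun_prop
    have hlim : Tendsto (fun μ : ℂ => K * ‖μ‖ + c ^ 2 / 2 * ‖μ‖ ^ 2) (𝓝 0) (𝓝 0) := by
      simpa using hcont.tendsto 0
    exact hlim.eventually_lt_const hκ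
  filter_upwards [hK, hsmall] with μ ⟨s, hs, hsa⟩ hsmallμ
  refine ⟨s, hs, ?_⟩
  have hc : ((n : ℂ) - 1) / 2 = (c : ℂ) := by push_cast [c]; ring
  rw [approxRoot, hc] at hsa
  have hfar : |‖s - μ‖ - ‖1 + c * μ ^ 2‖| ≤ ‖s - (1 + μ + c * μ ^ 2)‖ :=
    (abs_norm_sub_norm_le _ _).trans_eq (by ring_nf)
  have hnear := Complex.abs_norm_one_add_sub_one_sub_re_le (c * μ ^ 2)
  rw [Complex.re_ofReal_mul, norm_mul, Complex.norm_real, norm_pow, mul_pow, Real.norm_eq_abs,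
    sq_abs] at hnear
  have hbound : K * ‖μ‖ ^ 3 + c ^ 2 * (‖μ‖ ^ 2) ^ 2 / 2 ≤ κ * ‖μ‖ ^ 2 := by
    nlinarith [mul_le_mul_of_nonneg_right hsmallμ.le (sq_nonneg ‖μ‖)]
  rw [abs_le] at *
  constructor <;> linarith

theorem isRoot_shifted_of_isRoot_rotated {n : ℕ} (hn : 0 < n) {u l s : ℂ} (hu : u ^ n = 1)
    (hs : (X ^ n - 1 - C (u * l) * derivative (X ^ n - 1)).IsRoot s) :
    (((X : ℂ[X]) ^ n - 1).comp (X + C l) - C l * (derivative ((X : ℂ[X]) ^ n - 1)).comp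
      (X + C l)).IsRoot (u ^ (n - 1) * (s - u * l)) := by
  obtain ⟨N, rfl⟩ : ∃ N, n = N + 1 := ⟨n - 1, by omega⟩
  rw [Nat.add_sub_cancel]
  have hinv : u ^ N * u = 1 := by rw [← pow_succ, hu]
  have hshift : u ^ N * (s - u * l) + l = u ^ N * s := by linear_combination (-l) * hu
  have hpow' : (u ^ N) ^ N * u ^ N = 1 := by
    rw [← pow_succ, ← pow_mul, mul_comm, pow_mul, hu, one_pow]
  have hpow : (u ^ N) ^ N = u := by linear_combination u * hpow' - (u ^ N) ^ N * hinv
  simp only [IsRoot, map_mul, derivative_sub, derivative_X_pow_succ, map_add, map_natCast, map_one,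
    derivative_one, sub_zero, eval_sub, eval_pow, eval_X, eval_one, eval_mul, eval_C, eval_add,
    eval_natCast, sub_comp, pow_comp, X_comp, one_comp, mul_comp, add_comp, natCast_comp] at hs ⊢
  rw [hshift, mul_pow, mul_pow, pow_succ, hpow]
  linear_combination hs + s ^ (N + 1) * hinv

theorem eventually_forall_exists_isRoot_shifted {n : ℕ} (hn : 0 < n) {κ : ℝ} (hκ : 0 < κ) :
    ∀ᶠ l in 𝓝 (0 : ℂ), ∀ u : ℂ, u ^ n = 1 → ∃ z : ℂ,
      (((X : ℂ[X]) ^ n - 1).comp (X + C l) - C l * (derivative ((X : ℂ[X]) ^ n - 1)).comp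
        (X + C l)).IsRoot z ∧
      |‖z‖ - 1 - (n - 1) / 2 * (u ^ 2 * l ^ 2).re| ≤ κ * ‖l‖ ^ 2 := by
  obtain ⟨δ, hδ, hroot⟩ :=
    Metric.eventually_nhds_iff.1 (eventually_exists_isRoot_abs_norm_sub_le hn hκ)
  refine Metric.eventually_nhds_iff.2 ⟨δ, hδ, fun l hl u hu => ?_⟩
  have hu1 : ‖u‖ = 1 := Complex.norm_eq_one_of_pow_eq_one hu hn.ne'
  obtain ⟨s, hs, hbound⟩ := hroot (y := u * l) (by simpa [hu1] using hl)
  refine ⟨u ^ (n - 1) * (s - u * l), isRoot_shifted_of_isRoot_rotated hn hu hs, ?_⟩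
  simpa [hu1, mul_pow] using hbound

theorem roots_of_unity_incomparable (n : ℕ) (hn : 5 ≤ n) :
    ∃ ε > (0 : ℝ), ∀ l : ℂ, l ≠ 0 → ‖l‖ < ε →
      (∃ z : ℂ,
        (((X : Polynomial ℂ) ^ n - 1).comp (X + C l) -
          C l * (Polynomial.derivative ((X : Polynomial ℂ) ^ n - 1)).comp (X + C l)).IsRoot z ∧
        1 < ‖z‖) ∧
      (∃ z : ℂ,
        (((X : Polynomial ℂ) ^ n - 1).comp (X + C l) -
          C l * (Polynomial.derivative ((X : Polynomial ℂ) ^ n - 1)).comp (X + C l)).IsRoot z ∧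
        ‖z‖ < 1) := by
  have hn' : (5 : ℝ) ≤ n := by exact_mod_cast hn
  obtain ⟨δ, hδ, hroots⟩ := Metric.eventually_nhds_iff.1
    (eventually_forall_exists_isRoot_shifted (n := n) (by omega) (κ := (n - 1) / 8) (by linarith))
  refine ⟨δ, hδ, fun l hl hlδ => ?_⟩
  obtain ⟨u₁, hu₁, hre₁⟩ := exists_pow_eq_one_norm_div_two_le_re_sq_mul (n := n) (by omega)
    (by omega) (pow_ne_zero 2 hl)
  obtain ⟨u₂, hu₂, hre₂⟩ := exists_pow_eq_one_norm_div_two_le_re_sq_mul (n := n) (by omega)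
    (by omega) (neg_ne_zero.2 (pow_ne_zero 2 hl))
  obtain ⟨z₁, hz₁, hb₁⟩ := hroots (by simpa using hlδ) u₁ hu₁
  obtain ⟨z₂, hz₂, hb₂⟩ := hroots (by simpa using hlδ) u₂ hu₂
  simp only [norm_neg, norm_pow, mul_neg, Complex.neg_re] at hre₁ hre₂
  rw [abs_le] at hb₁ hb₂
  have hl2 : 0 < ‖l‖ ^ 2 := by positivity
  exact ⟨⟨z₁, hz₁, by nlinarith⟩, ⟨z₂, hz₂, by nlinarith⟩⟩
end

section
/- Let P₁, P₂ be monic hyperbolic polynomials of degree n with roots x_1 ≤ … ≤ x_n and y_1 ≤ … ≤ y_n respectively. If max(x_i, y_i) ≤ min(x_{i+1}, y_{i+1}) for all 1 ≤ i ≤ n−1, then (1−α)P₁ + αP₂ is hyperbolic for every α ∈ [0,1]. -/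
/-!
Write `aᵢ = min xᵢ yᵢ` and `bᵢ = max xᵢ yᵢ`; the hypothesis says `a₀ ≤ b₀ ≤ a₁ ≤ b₁ ≤ ⋯`.
Both `P₁` and `P₂` have the sign `(-1)^(n-i)` at `aᵢ` and the opposite sign at `bᵢ` (weakly), hence
so does `Q = (1 - α) P₁ + α P₂`, and for `0 < α < 1` strictly unless the point is a common root of
`P₁` and `P₂`. A common root `xₚ = y_q` may be chosen with `|p - q| ≤ 1`; it factors out of `Q`,
and deleting `xₚ` and `y_q` leaves root sequences satisfying the same hypothesis, so we induct
on `n`. Without common roots the intermediate value theorem gives a root of `Q` in each open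
interval `(aᵢ, bᵢ)`: `n` distinct roots of a monic polynomial of degree `n`.
-/

open Polynomial Finset

def natSuccAbove (p i : ℕ) : ℕ := if i < p then i else i + 1

lemma natSuccAbove_lt_natSuccAbove {p q i j : ℕ} (hqp : q ≤ p + 1) (hij : i < j) :
    natSuccAbove p i < natSuccAbove q j := by
  unfold natSuccAbove; split_ifs <;> omega

lemma natSuccAbove_lt_succ {p i n : ℕ} (hi : i < n) : natSuccAbove p i < n + 1 := by
  unfold natSuccAbove; split_ifs <;> omega

theorem prod_range_succ_eq_mul_prod_natSuccAbove {M : Type*} [CommMonoid M] (f : ℕ → M)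
    {n p : ℕ} (hp : p ≤ n) :
    ∏ i ∈ range (n + 1), f i = f p * ∏ i ∈ range n, f (natSuccAbove p i) := by
  rw [prod_range, Fin.prod_univ_succAbove _ ⟨p, Nat.lt_succ_of_le hp⟩, prod_range]
  congr 2 with i
  simp only [Fin.succAbove, Fin.lt_def, Fin.val_castSucc, natSuccAbove]
  split_ifs <;> rfl

section Interlaced

variable {β : Type*} [LinearOrder β] {n : ℕ} {x y : ℕ → β}

/-- For sorted `x` and `y`, this says that `∏ (X - C xᵢ)` and `∏ (X - C yᵢ)` have a common
interlacing. -/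
def Interlaced (n : ℕ) (x y : ℕ → β) : Prop :=
  ∀ i j, i < j → j < n → max (x i) (y i) ≤ min (x j) (y j)

lemma interlaced_of_succ
    (h : ∀ i, i + 1 < n → max (x i) (y i) ≤ min (x (i + 1)) (y (i + 1))) :
    Interlaced n x y := by
  intro i j hij hj
  induction j, hij using Nat.le_induction with
  | base => exact h i hj
  | succ j hij ih => exact (ih (by omega)).trans (min_le_max.trans (h j hj))

lemma Interlaced.symm (h : Interlaced n x y) : Interlaced n y x := by
  intro i j hij hj
  rw [max_comm, min_comm]
  exact h i j hij hj

lemma Interlaced.fst_le_fst (h : Interlaced n x y) {i j : ℕ} (hij : i ≤ j) (hj : j < n) :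
    x i ≤ x j := by
  rcases hij.eq_or_lt with rfl | hij
  · exact le_rfl
  · exact (le_max_left _ _).trans ((h i j hij hj).trans (min_le_left _ _))

lemma Interlaced.comp_natSuccAbove (h : Interlaced (n + 1) x y) {p q : ℕ}
    (hpq : p ≤ q + 1) (hqp : q ≤ p + 1) :
    Interlaced n (x ∘ natSuccAbove p) (y ∘ natSuccAbove q) := by
  have H : ∀ a b, a < b → b < n + 1 → (x a ≤ x b ∧ y a ≤ x b) ∧ x a ≤ y b ∧ y a ≤ y b :=
    fun a b hab hb => by simpa only [max_le_iff, le_min_iff] using h a b hab hb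
  intro i j hij hj
  simp only [Function.comp_apply, max_le_iff, le_min_iff]
  exact ⟨⟨(H _ _ (natSuccAbove_lt_natSuccAbove le_self_add hij) (natSuccAbove_lt_succ hj)).1.1,
      (H _ _ (natSuccAbove_lt_natSuccAbove hpq hij) (natSuccAbove_lt_succ hj)).1.2⟩,
    (H _ _ (natSuccAbove_lt_natSuccAbove hqp hij) (natSuccAbove_lt_succ hj)).2.1,
    (H _ _ (natSuccAbove_lt_natSuccAbove le_self_add hij) (natSuccAbove_lt_succ hj)).2.2⟩

lemma Interlaced.exists_adjacent_eq (h : Interlaced n x y) {j k : ℕ} (hj : j < n) (hk : k < n)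
    (hjk : x j = y k) :
    ∃ p q, p < n ∧ q < n ∧ p ≤ q + 1 ∧ q ≤ p + 1 ∧ x p = y q := by
  rcases lt_or_ge (j + 1) k with hjk' | hjk'
  · refine ⟨j, j + 1, hj, by omega, by omega, le_rfl, le_antisymm ?_ ?_⟩
    · exact le_max_left _ _ |>.trans (h j (j + 1) (by omega) (by omega)) |>.trans
        (min_le_right _ _)
    · rw [hjk]
      exact le_max_right _ _ |>.trans (h (j + 1) k hjk' hk) |>.trans (min_le_right _ _)
  rcases lt_or_ge (k + 1) j with hkj | hkj
  · refine ⟨k + 1, k, by omega, hk, le_rfl, by omega, le_antisymm ?_ ?_⟩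
    · rw [← hjk]
      exact le_max_left _ _ |>.trans (h (k + 1) j hkj hj) |>.trans (min_le_left _ _)
    · exact le_max_right _ _ |>.trans (h k (k + 1) (by omega) (by omega)) |>.trans
        (min_le_left _ _)
  exact ⟨j, k, hj, hk, hkj, hjk', hjk⟩

end Interlaced

lemma neg_one_pow_mul_prod_sub_nonneg {R : Type*} [CommRing R] [LinearOrder R]
    [IsStrictOrderedRing R] {x : ℕ → R} {t : R} {k n : ℕ} (hk : k ≤ n)
    (hlo : ∀ j < k, x j ≤ t) (hhi : ∀ j, k ≤ j → j < n → t ≤ x j) :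
    0 ≤ (-1) ^ (n - k) * ∏ j ∈ range n, (t - x j) := by
  rw [← prod_range_mul_prod_Ico _ hk, mul_left_comm, ← Nat.card_Ico, ← prod_neg]
  refine mul_nonneg (prod_nonneg fun j hj => ?_) (prod_nonneg fun j hj => ?_)
  · exact sub_nonneg.2 (hlo j (mem_range.1 hj))
  · rw [mem_Ico] at hj
    exact neg_nonneg.2 (sub_nonpos.2 (hhi j hj.1 hj.2))

section Sign

variable {R : Type*} [CommRing R] [LinearOrder R] [IsStrictOrderedRing R] {n i : ℕ}
  {x y : ℕ → R}

lemma Interlaced.neg_one_pow_mul_prod_min_sub_nonneg (h : Interlaced n x y) (hi : i < n) :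
    0 ≤ (-1) ^ (n - i) * ∏ j ∈ range n, (min (x i) (y i) - x j) :=
  neg_one_pow_mul_prod_sub_nonneg hi.le (fun j hj => (le_max_left _ _).trans (h j i hj hi))
    (fun _ hij hj => (min_le_left _ _).trans (h.fst_le_fst hij hj))

lemma Interlaced.neg_one_pow_mul_prod_max_sub_nonneg (h : Interlaced n x y) (hi : i < n) :
    0 ≤ (-1) ^ (n - (i + 1)) * ∏ j ∈ range n, (max (x i) (y i) - x j) :=
  neg_one_pow_mul_prod_sub_nonneg hi
    (fun _ hj => (h.fst_le_fst (Nat.lt_succ_iff.1 hj) hi).trans (le_max_left _ _))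
    (fun j hij hj => (h i j hij hj).trans (min_le_left _ _))

end Sign

noncomputable def segmentPoly (n : ℕ) (x y : ℕ → ℝ) (α : ℝ) : ℝ[X] :=
  C (1 - α) * ∏ i ∈ range n, (X - C (x i)) + C α * ∏ i ∈ range n, (X - C (y i))

lemma eval_segmentPoly (n : ℕ) (x y : ℕ → ℝ) (α t : ℝ) :
    (segmentPoly n x y α).eval t =
      (1 - α) * ∏ j ∈ range n, (t - x j) + α * ∏ j ∈ range n, (t - y j) := by
  simp [segmentPoly, eval_prod]

lemma isMonicOfDegree_prod_X_sub_C {R ι : Type*} [CommRing R] [Nontrivial R] (s : Finset ι)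
    (f : ι → R) : IsMonicOfDegree (∏ i ∈ s, (X - C (f i))) #s := by
  rw [isMonicOfDegree_iff']
  exact ⟨by simp [natDegree_prod_of_monic _ _ fun i _ => monic_X_sub_C (f i)],
    monic_prod_of_monic _ _ fun i _ => monic_X_sub_C (f i)⟩

lemma Polynomial.IsMonicOfDegree.C_mul_add_C_mul {R : Type*} [CommSemiring R] [Nontrivial R]
    {p q : R[X]} {n : ℕ} (hp : IsMonicOfDegree p n) (hq : IsMonicOfDegree q n) {a b : R}
    (hab : a + b = 1) :
    IsMonicOfDegree (C a * p + C b * q) n := by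
  rw [isMonicOfDegree_iff] at hp hq ⊢
  refine ⟨natDegree_add_le_of_degree_le ((natDegree_C_mul_le _ _).trans hp.1)
    ((natDegree_C_mul_le _ _).trans hq.1), ?_⟩
  rw [coeff_add, coeff_C_mul, coeff_C_mul, hp.2, hq.2, mul_one, mul_one, hab]

lemma isMonicOfDegree_segmentPoly (n : ℕ) (x y : ℕ → ℝ) (α : ℝ) :
    IsMonicOfDegree (segmentPoly n x y α) n := by
  have h := (isMonicOfDegree_prod_X_sub_C (range n) x).C_mul_add_C_mul
    (isMonicOfDegree_prod_X_sub_C (range n) y) (sub_add_cancel 1 α)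
  rwa [card_range] at h

lemma segmentPoly_succ {n p q : ℕ} (x y : ℕ → ℝ) (α : ℝ) (hp : p ≤ n) (hq : q ≤ n)
    (hpq : x p = y q) :
    segmentPoly (n + 1) x y α =
      (X - C (x p)) * segmentPoly n (x ∘ natSuccAbove p) (y ∘ natSuccAbove q) α := by
  rw [segmentPoly, segmentPoly, prod_range_succ_eq_mul_prod_natSuccAbove _ hp,
    prod_range_succ_eq_mul_prod_natSuccAbove _ hq, hpq]
  simp only [Function.comp_apply]
  ring

lemma Polynomial.exists_isRoot_Ioo {p : ℝ[X]} {a b : ℝ} (hab : a ≤ b) (ha : p.eval a < 0)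
    (hb : 0 < p.eval b) : ∃ t ∈ Set.Ioo a b, p.IsRoot t :=
  intermediate_value_Ioo hab p.continuousOn ⟨ha, hb⟩

lemma Polynomial.le_card_roots_of_injOn {R : Type*} [CommRing R] [IsDomain R] {p : R[X]}
    (hp : p ≠ 0) {n : ℕ} {t : ℕ → R} (ht : Set.InjOn t (Set.Iio n))
    (hroot : ∀ i < n, p.IsRoot (t i)) : n ≤ p.roots.card := by
  classical
  calc n = #((range n).image t) := by rw [card_image_of_injOn (by simpa using ht), card_range]
    _ ≤ #p.roots.toFinset := card_le_card fun r hr => by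
        obtain ⟨i, hi, rfl⟩ := mem_image.1 hr
        exact Multiset.mem_toFinset.2 ((mem_roots hp).2 (hroot i (mem_range.1 hi)))
    _ ≤ p.roots.card := Multiset.toFinset_card_le _

section Segment

variable {n : ℕ} {x y : ℕ → ℝ} {α : ℝ}

lemma neg_one_pow_mul_eval_segmentPoly_pos {e : ℕ} {t : ℝ} (hα0 : 0 < α) (hα1 : α < 1)
    (hx : 0 ≤ (-1) ^ e * ∏ j ∈ range n, (t - x j))
    (hy : 0 ≤ (-1) ^ e * ∏ j ∈ range n, (t - y j))
    (hne : ∏ j ∈ range n, (t - x j) ≠ 0 ∨ ∏ j ∈ range n, (t - y j) ≠ 0) :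
    0 < (-1) ^ e * (segmentPoly n x y α).eval t := by
  have hs : (-1 : ℝ) ^ e ≠ 0 := pow_ne_zero _ (by norm_num)
  rw [eval_segmentPoly, mul_add, mul_left_comm, mul_left_comm _ α]
  rcases hne with h | h
  · exact add_pos_of_pos_of_nonneg (mul_pos (by linarith) (hx.lt_of_ne (mul_ne_zero hs h).symm))
      (mul_nonneg hα0.le hy)
  · exact add_pos_of_nonneg_of_pos (mul_nonneg (by linarith) hx)
      (mul_pos hα0 (hy.lt_of_ne (mul_ne_zero hs h).symm))

lemma Interlaced.exists_isRoot_segmentPoly_Ioo (h : Interlaced n x y) (hα0 : 0 < α)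
    (hα1 : α < 1) (hne : ∀ j < n, ∀ k < n, x j ≠ y k) {i : ℕ} (hi : i < n) :
    ∃ t ∈ Set.Ioo (min (x i) (y i)) (max (x i) (y i)), (segmentPoly n x y α).IsRoot t := by
  have hne' : ∀ t, ∏ j ∈ range n, (t - x j) ≠ 0 ∨ ∏ j ∈ range n, (t - y j) ≠ 0 := by
    intro t
    by_contra! ⟨hx, hy⟩
    obtain ⟨j, hj, hxj⟩ := prod_eq_zero_iff.1 hx
    obtain ⟨k, hk, hyk⟩ := prod_eq_zero_iff.1 hy
    exact hne j (mem_range.1 hj) k (mem_range.1 hk)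
      ((sub_eq_zero.1 hxj).symm.trans (sub_eq_zero.1 hyk))
  set s : ℝ := (-1) ^ (n - (i + 1))
  have hmin : 0 < (-1) ^ (n - i) * (segmentPoly n x y α).eval (min (x i) (y i)) :=
    neg_one_pow_mul_eval_segmentPoly_pos hα0 hα1 (h.neg_one_pow_mul_prod_min_sub_nonneg hi)
      (by rw [min_comm]; exact h.symm.neg_one_pow_mul_prod_min_sub_nonneg hi) (hne' _)
  have hmax : 0 < s * (segmentPoly n x y α).eval (max (x i) (y i)) :=
    neg_one_pow_mul_eval_segmentPoly_pos hα0 hα1 (h.neg_one_pow_mul_prod_max_sub_nonneg hi)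
      (by rw [max_comm]; exact h.symm.neg_one_pow_mul_prod_max_sub_nonneg hi) (hne' _)
  rw [show n - i = n - (i + 1) + 1 by omega, pow_succ, mul_neg_one, neg_mul] at hmin
  obtain ⟨t, ht, hroot⟩ := exists_isRoot_Ioo (p := C s * segmentPoly n x y α) min_le_max
    (by simpa using hmin) (by simpa using hmax)
  exact ⟨t, ht, (root_mul.1 hroot).resolve_left (by simp [s])⟩

theorem Interlaced.splits_segmentPoly_of_forall_ne (h : Interlaced n x y) (hα0 : 0 < α)
    (hα1 : α < 1) (hne : ∀ j < n, ∀ k < n, x j ≠ y k) : (segmentPoly n x y α).Splits := by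
  have hdeg := isMonicOfDegree_segmentPoly n x y α
  choose! t ht hroot using fun i (hi : i < n) => h.exists_isRoot_segmentPoly_Ioo hα0 hα1 hne hi
  have hmono : StrictMonoOn t (Set.Iio n) := fun i hi j hj hij =>
    (ht i hi).2.trans ((h i j hij hj).trans_lt (ht j hj).1)
  rw [splits_iff_card_roots, hdeg.natDegree_eq]
  exact le_antisymm ((card_roots' _).trans hdeg.natDegree_eq.le)
    (le_card_roots_of_injOn hdeg.ne_zero hmono.injOn hroot)

theorem Interlaced.splits_segmentPoly_of_pos_of_lt_one (h : Interlaced n x y) (hα0 : 0 < α)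
    (hα1 : α < 1) : (segmentPoly n x y α).Splits := by
  induction n generalizing x y with
  | zero => exact h.splits_segmentPoly_of_forall_ne hα0 hα1 (by simp)
  | succ n ih =>
    by_cases hcommon : ∃ j < n + 1, ∃ k < n + 1, x j = y k
    · obtain ⟨j, hj, k, hk, hjk⟩ := hcommon
      obtain ⟨p, q, hp, hq, hpq, hqp, hxy⟩ := h.exists_adjacent_eq hj hk hjk
      rw [segmentPoly_succ x y α (by omega) (by omega) hxy]
      exact (Splits.X_sub_C _).mul (ih (h.comp_natSuccAbove hpq hqp))
    · exact h.splits_segmentPoly_of_forall_ne hα0 hα1 fun j hj k hk hjk =>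
        hcommon ⟨j, hj, k, hk, hjk⟩

theorem Interlaced.splits_segmentPoly (h : Interlaced n x y) (hα0 : 0 ≤ α) (hα1 : α ≤ 1) :
    (segmentPoly n x y α).Splits := by
  rcases hα0.eq_or_lt with rfl | hα0
  · simp [segmentPoly]
  rcases hα1.eq_or_lt with rfl | hα1
  · simp [segmentPoly]
  exact h.splits_segmentPoly_of_pos_of_lt_one hα0 hα1

end Segment

theorem segment_hyperbolic_general (n : ℕ) (x y : ℕ → ℝ)
    (hinter : ∀ i, i + 1 < n → max (x i) (y i) ≤ min (x (i + 1)) (y (i + 1)))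
    (P₁ P₂ : Polynomial ℝ)
    (hP₁ : P₁ = ∏ i ∈ Finset.range n, (X - C (x i)))
    (hP₂ : P₂ = ∏ i ∈ Finset.range n, (X - C (y i))) :
    ∀ α : ℝ, 0 ≤ α → α ≤ 1 → (C (1 - α) * P₁ + C α * P₂).roots.card = n := by
  intro α hα0 hα1
  subst hP₁ hP₂
  have hsplits := (interlaced_of_succ hinter).splits_segmentPoly hα0 hα1
  exact hsplits.natDegree_eq_card_roots.symm.trans
    (isMonicOfDegree_segmentPoly n x y α).natDegree_eq

theorem segment_hyperbolic (n : ℕ) (x y : ℕ → ℝ)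
    (hx : ∀ i j, i ≤ j → j < n → x i ≤ x j)
    (hy : ∀ i j, i ≤ j → j < n → y i ≤ y j)
    (hinter : ∀ i, i + 1 < n → max (x i) (y i) ≤ min (x (i + 1)) (y (i + 1)))
    (P₁ P₂ : Polynomial ℝ)
    (hP₁ : P₁ = ∏ i ∈ Finset.range n, (X - C (x i)))
    (hP₂ : P₂ = ∏ i ∈ Finset.range n, (X - C (y i))) :
    ∀ α : ℝ, 0 ≤ α → α ≤ 1 → (C (1 - α) * P₁ + C α * P₂).roots.card = n :=
  segment_hyperbolic_general n x y hinter P₁ P₂ hP₁ hP₂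
end
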